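/- arXiv:0901.1463 — 8 statements merged into one kernel-verified Lean document; each statement's English description precedes it below -/
import Mathlib

section
/- Let Ω be a bounded domain in ℝ^d with smooth boundary and a(x) a symmetric matrix field with L^∞ entries satisfying λ_min|ξ|² ≤ ξᵀa(x)ξ ≤ λ_max|ξ|² for all ξ. For ψ ∈ H¹₀(Ω), define the flux norm ‖ψ‖_{a-flux} := ‖(a∇ψ)_pot‖_{L²}, where (·)_pot denotes the orthogonal projection in (L²(Ω))^d onto the closure of {∇f : f ∈ C₀^∞(Ω)}. Then for all ψ ∈ H¹₀(Ω): λ_min ‖∇ψ‖_{L²} ≤ ‖ψ‖_{a-flux} ≤ λ_max ‖∇ψ‖_{L²}. In particular, ‖·‖_{a-flux} is a norm on H¹₀(Ω). -/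
/-!
Write `g = G ψ ∈ Kpot` and `p = (A g)_pot`. Since `g` lies in `Kpot`, projecting does not change
its pairing with `A g`, so `λ_min ‖g‖² ≤ ⟪g, A g⟫ = ⟪g, p⟫ ≤ ‖g‖ ‖p‖`. For the upper bound,
projections are contractions and a positive symmetric `A` with `⟪ξ, A ξ⟫ ≤ λ_max ‖ξ‖²` has norm
at most `λ_max`, by the Cauchy–Schwarz inequality for the semi-inner product `⟪ξ, A η⟫`.
-/

open RealInnerProductSpace

section

variable {E : Type*} [NormedAddCommGroup E] [InnerProductSpace ℝ E]

theorem LinearMap.IsPositive.norm_apply_le {A : E →ₗ[ℝ] E} (hA : A.IsPositive) {c : ℝ}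
    (hc : ∀ x, ⟪x, A x⟫ ≤ c * ‖x‖ ^ 2) (x : E) : ‖A x‖ ≤ c * ‖x‖ := by
  have hcx : 0 ≤ c * ‖x‖ := by
    rcases eq_or_ne x 0 with rfl | hx
    · simp
    · have hx_pos : 0 < ‖x‖ := norm_pos_iff.mpr hx
      have : 0 ≤ c * ‖x‖ * ‖x‖ := by
        rw [mul_assoc, ← sq]; exact (hA.inner_nonneg_right x).trans (hc x)
      exact nonneg_of_mul_nonneg_left this hx_pos
  rcases eq_or_ne (A x) 0 with hAx | hAx
  · rwa [hAx, norm_zero]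
  have cauchySchwarz :=
    LinearMap.BilinForm.apply_mul_apply_le_of_forall_zero_le ((innerₗ E).compl₂ A)
      hA.inner_nonneg_right x (A x)
  simp only [LinearMap.compl₂_apply, innerₗ_apply_apply] at cauchySchwarz
  rw [← hA.isSymmetric x (A x), real_inner_self_eq_norm_sq] at cauchySchwarz
  have hquartic : ‖A x‖ ^ 2 * ‖A x‖ ^ 2 ≤ (c * ‖x‖) ^ 2 * ‖A x‖ ^ 2 :=
    calc ‖A x‖ ^ 2 * ‖A x‖ ^ 2 ≤ ⟪x, A x⟫ * ⟪A x, A (A x)⟫ := cauchySchwarz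
      _ ≤ (c * ‖x‖ ^ 2) * (c * ‖A x‖ ^ 2) :=
        mul_le_mul (hc x) (hc (A x)) (hA.inner_nonneg_right _)
          ((hA.inner_nonneg_right x).trans (hc x))
      _ = (c * ‖x‖) ^ 2 * ‖A x‖ ^ 2 := by ring
  have hsq : ‖A x‖ ^ 2 ≤ (c * ‖x‖) ^ 2 :=
    le_of_mul_le_mul_right hquartic (by positivity [norm_pos_iff.mpr hAx])
  exact (pow_le_pow_iff_left₀ (norm_nonneg _) hcx two_ne_zero).1 hsq

theorem Submodule.mul_norm_le_norm_orthogonalProjectionOnto (K : Submodule ℝ E)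
    [K.HasOrthogonalProjection] {g : E} (hg : g ∈ K) {c : ℝ} {v : E}
    (h : c * ‖g‖ ^ 2 ≤ ⟪g, v⟫) : c * ‖g‖ ≤ ‖(K.orthogonalProjectionOnto v : E)‖ := by
  rcases eq_or_ne g 0 with rfl | hg0
  · simp
  have hpair : ⟪g, K.orthogonalProjectionOnto v⟫ = ⟪g, v⟫ :=
    K.inner_orthogonalProjectionOnto_eq_of_mem_left ⟨g, hg⟩ v
  have : c * ‖g‖ * ‖g‖ ≤ ‖(K.orthogonalProjectionOnto v : E)‖ * ‖g‖ :=
    calc c * ‖g‖ * ‖g‖ = c * ‖g‖ ^ 2 := by ring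
      _ ≤ ⟪g, K.orthogonalProjectionOnto v⟫ := hpair ▸ h
      _ ≤ ‖g‖ * ‖(K.orthogonalProjectionOnto v : E)‖ := real_inner_le_norm _ _
      _ = _ := mul_comm _ _
  exact le_of_mul_le_mul_right this (norm_pos_iff.mpr hg0)

end

/-- `E` is the Hilbert space `(L²(Ω))^d`, `H` is `H¹₀(Ω)`,
`G` is the gradient operator (injective by the Poincaré inequality), `Kpot` is
`L²_pot(Ω)`, the closure of the gradients of `C₀^∞(Ω)` functions (equivalently, of
`H¹₀(Ω)` functions), `A` is multiplication by the symmetric matrix field `a(x)`,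
whose pointwise ellipticity `λ_min|ξ|² ≤ ξᵀ a ξ ≤ λ_max|ξ|²` yields the symmetry
and the Rayleigh-quotient bounds assumed below. `(·)_pot` is the orthogonal
projection onto `Kpot`. -/
theorem flux_norm_equivalence_general
    {E H : Type*}
    [NormedAddCommGroup E] [InnerProductSpace ℝ E]
    [AddCommGroup H] [Module ℝ H]
    (G : H →ₗ[ℝ] E) (hGinj : Function.Injective G)
    (Kpot : Submodule ℝ E) [Submodule.HasOrthogonalProjection Kpot]
    (hK : Kpot = (LinearMap.range G).topologicalClosure)
    (A : E →ₗ[ℝ] E) (lmin lmax : ℝ) (hlmin : 0 < lmin)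
    (hsym : ∀ ξ η : E, ⟪A ξ, η⟫ = ⟪ξ, A η⟫)
    (hell₁ : ∀ ξ : E, lmin * ‖ξ‖ ^ 2 ≤ ⟪ξ, A ξ⟫)
    (hell₂ : ∀ ξ : E, ⟪ξ, A ξ⟫ ≤ lmax * ‖ξ‖ ^ 2) :
    (∀ ψ : H,
        lmin * ‖G ψ‖ ≤ ‖(Kpot.orthogonalProjectionOnto (A (G ψ)) : E)‖ ∧
        ‖(Kpot.orthogonalProjectionOnto (A (G ψ)) : E)‖ ≤ lmax * ‖G ψ‖) ∧
    (∀ ψ : H, ‖(Kpot.orthogonalProjectionOnto (A (G ψ)) : E)‖ = 0 → ψ = 0) := by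
  have hmem : ∀ ψ : H, G ψ ∈ Kpot := fun ψ =>
    hK ▸ Submodule.le_topologicalClosure _ (LinearMap.mem_range_self G ψ)
  have hpos : A.IsPositive :=
    ⟨hsym, fun ξ => by
      rw [RCLike.re_to_real, real_inner_comm]
      exact (mul_nonneg hlmin.le (sq_nonneg _)).trans (hell₁ ξ)⟩
  have bounds : ∀ ψ : H,
      lmin * ‖G ψ‖ ≤ ‖(Kpot.orthogonalProjectionOnto (A (G ψ)) : E)‖ ∧
      ‖(Kpot.orthogonalProjectionOnto (A (G ψ)) : E)‖ ≤ lmax * ‖G ψ‖ := fun ψ =>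
    ⟨Kpot.mul_norm_le_norm_orthogonalProjectionOnto (hmem ψ) (hell₁ _),
      (Kpot.norm_orthogonalProjectionOnto_apply_le _).trans (hpos.norm_apply_le hell₂ _)⟩
  refine ⟨bounds, fun ψ hflux => hGinj ?_⟩
  have : lmin * ‖G ψ‖ ≤ 0 := hflux ▸ (bounds ψ).1
  rw [map_zero, ← norm_le_zero_iff]
  exact nonpos_of_mul_nonpos_right this hlmin

/-- The flux norm `ψ ↦ ‖(a∇ψ)_pot‖_{L²}` on `H¹₀(Ω)` is equivalent to the
`H¹₀` (gradient `L²`) norm, with constants the ellipticity bounds of `a`, and is a norm.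

Abstract encoding: `E` is the Hilbert space `(L²(Ω))^d`, `H` is `H¹₀(Ω)`,
`G` is the gradient operator (injective by the Poincaré inequality), `Kpot` is
`L²_pot(Ω)`, the closure of the gradients of `C₀^∞(Ω)` functions (equivalently, of
`H¹₀(Ω)` functions), `A` is multiplication by the symmetric matrix field `a(x)`,
whose pointwise ellipticity `λ_min|ξ|² ≤ ξᵀ a ξ ≤ λ_max|ξ|²` yields the symmetry
and the Rayleigh-quotient bounds assumed below. `(·)_pot` is the orthogonal
projection onto `Kpot`. -/
theorem flux_norm_equivalence
    {E H : Type*}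
    [NormedAddCommGroup E] [InnerProductSpace ℝ E] [CompleteSpace E]
    [AddCommGroup H] [Module ℝ H]
    (G : H →ₗ[ℝ] E) (hGinj : Function.Injective G)
    (Kpot : Submodule ℝ E) [Submodule.HasOrthogonalProjection Kpot]
    (hK : Kpot = (LinearMap.range G).topologicalClosure)
    (A : E →ₗ[ℝ] E) (lmin lmax : ℝ) (hlmin : 0 < lmin)
    (hsym : ∀ ξ η : E, ⟪A ξ, η⟫ = ⟪ξ, A η⟫)
    (hell₁ : ∀ ξ : E, lmin * ‖ξ‖ ^ 2 ≤ ⟪ξ, A ξ⟫)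
    (hell₂ : ∀ ξ : E, ⟪ξ, A ξ⟫ ≤ lmax * ‖ξ‖ ^ 2) :
    (∀ ψ : H,
        lmin * ‖G ψ‖ ≤ ‖(Kpot.orthogonalProjectionOnto (A (G ψ)) : E)‖ ∧
        ‖(Kpot.orthogonalProjectionOnto (A (G ψ)) : E)‖ ≤ lmax * ‖G ψ‖) ∧
    (∀ ψ : H, ‖(Kpot.orthogonalProjectionOnto (A (G ψ)) : E)‖ = 0 → ψ = 0) :=
  flux_norm_equivalence_general G hGinj Kpot hK A lmin lmax hlmin hsym hell₁ hell₂
end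

section
/- Let V be a finite dimensional subspace of H¹₀(Ω). For f ∈ L²(Ω), let u ∈ H¹₀(Ω) solve −div(a∇u) = f. Then sup_{f ∈ L²(Ω)} inf_{v ∈ V} ‖u − v‖_{a-flux}/‖f‖_{L²} = sup_{w ∈ H²(Ω)∩H¹₀(Ω)} inf_{v ∈ V} ‖(∇w − a∇v)_pot‖_{L²}/‖Δw‖_{L²}. -/
/-!
If `-Δw = f`, then `∇w` and the flux `a∇u(f)` have the same weak divergence, so their difference
is orthogonal to every gradient and is annihilated by the projection onto `L²_pot(Ω)`. Hence
`(∇w - a∇v)_pot = (a∇(u(f) - v))_pot` for every `v`, and `‖Δw‖ = ‖f‖`. Since `f ↦ w` is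
onto in both directions (`H²` regularity one way, `f := -Δw` the other), the two suprema run
over the same family of values.
-/

open RealInnerProductSpace

namespace Submodule

variable {𝕜 E : Type*} [RCLike 𝕜] [NormedAddCommGroup E] [InnerProductSpace 𝕜 E]

theorem orthogonalProjectionOnto_eq_of_sub_mem_orthogonal (K : Submodule 𝕜 E)
    [K.HasOrthogonalProjection] {x y : E} (h : x - y ∈ Kᗮ) :
    K.orthogonalProjectionOnto x = K.orthogonalProjectionOnto y := by
  rwa [← sub_eq_zero, ← map_sub, orthogonalProjectionOnto_eq_zero_iff]

end Submodule

theorem orthogonalProjectionOnto_sub_flux_eq {E H : Type*} [NormedAddCommGroup E]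
    [InnerProductSpace ℝ E] [AddCommGroup H] [Module ℝ H] (G : H →ₗ[ℝ] E) (A : E →ₗ[ℝ] E)
    (Kpot : Submodule ℝ E) [Kpot.HasOrthogonalProjection]
    (hK : Kpot = (LinearMap.range G).topologicalClosure) {σ : E} {u : H}
    (hσ : ∀ φ : H, ⟪σ, G φ⟫ = ⟪A (G u), G φ⟫) (v : H) :
    Kpot.orthogonalProjectionOnto (σ - A (G v)) = Kpot.orthogonalProjectionOnto (A (G (u - v))) := by
  apply Kpot.orthogonalProjectionOnto_eq_of_sub_mem_orthogonal
  have hdiff : σ - A (G v) - A (G (u - v)) = σ - A (G u) := by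
    rw [map_sub, map_sub]; abel
  rw [hdiff, hK, Submodule.orthogonal_closure]
  refine Submodule.sub_mem_orthogonal_of_inner_left ?_
  rintro ⟨_, φ, rfl⟩
  exact hσ φ

/-- `L2 = L²(Ω)`, `E = (L²(Ω))^d`, `H = H¹₀(Ω)` with gradient `G` and embedding `ι` into `L²`;
`Kpot = L²_pot(Ω)`; `A` is multiplication by `a(x)`; `sol f` is the weak solution of
`-div(a∇u) = f`; `W = H²(Ω) ∩ H¹₀(Ω)` with inclusion `j` into `H¹₀` and Laplacian `lap`. -/
theorem flux_norm_sup_inf_eq_laplacian_form_general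
    {L2 E H W : Type*}
    [NormedAddCommGroup L2] [InnerProductSpace ℝ L2]
    [NormedAddCommGroup E] [InnerProductSpace ℝ E]
    [AddCommGroup H] [Module ℝ H] [AddCommGroup W] [Module ℝ W]
    (G : H →ₗ[ℝ] E) (ι : H →ₗ[ℝ] L2)
    (Kpot : Submodule ℝ E) [Kpot.HasOrthogonalProjection]
    (hK : Kpot = (LinearMap.range G).topologicalClosure)
    (A : E →ₗ[ℝ] E)
    (sol : L2 → H)
    (hsol : ∀ (f : L2) (φ : H), ⟪A (G (sol f)), G φ⟫ = ⟪f, ι φ⟫)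
    (j : W →ₗ[ℝ] H) (lap : W →ₗ[ℝ] L2)
    (hlap : ∀ (w : W) (φ : H), ⟪G (j w), G φ⟫ = -⟪lap w, ι φ⟫)
    (hreg : ∀ f : L2, ∃ w : W, lap w = -f)
    (V : Submodule ℝ H) :
    (⨆ f : L2, ⨅ v : V,
        ‖(Submodule.orthogonalProjectionOnto Kpot (A (G (sol f - (v : H)))) : E)‖ / ‖f‖)
      = ⨆ w : W, ⨅ v : V,
          ‖(Submodule.orthogonalProjectionOnto Kpot (G (j w) - A (G (v : H))) : E)‖ / ‖lap w‖ := by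
  have hsurj : Function.Surjective fun w => -lap w := fun f =>
    (hreg f).imp fun w hw => by simp only [hw, neg_neg]
  refine (hsurj.iSup_comp _).symm.trans (iSup_congr fun w => iInf_congr fun v => ?_)
  have hdiv : ∀ φ : H, ⟪G (j w), G φ⟫ = ⟪A (G (sol (-lap w))), G φ⟫ := fun φ => by
    rw [hlap, hsol, inner_neg_left]
  rw [norm_neg, orthogonalProjectionOnto_sub_flux_eq G A Kpot hK hdiv]

/-- Lemma `Prop1` of the paper: for a finite dimensional subspace `V` of
`H¹₀(Ω)`, with `u = u(f)` the solution of `-div(a∇u) = f`,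
`sup_{f ∈ L²} inf_{v ∈ V} ‖u − v‖_{a-flux}/‖f‖_{L²}
  = sup_{w ∈ H²∩H¹₀} inf_{v ∈ V} ‖(∇w − a∇v)_pot‖_{L²}/‖Δw‖_{L²}`.

Abstract encoding: `L2 = L²(Ω)`, `E = (L²(Ω))^d`, `H = H¹₀(Ω)` with gradient `G` and
embedding `ι` into `L²`; `Kpot = L²_pot(Ω)` is the closure of the range of `G`
(= closure of gradients of `C₀^∞(Ω)` functions); `A` is multiplication by the symmetric
uniformly elliptic matrix `a(x)`; `sol f` is the weak solution of `-div(a∇(sol f)) = f`;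
`W = H²(Ω) ∩ H¹₀(Ω)` with inclusion `j` into `H¹₀` and Laplacian `lap`, satisfying
`∫ ∇w·∇φ = -∫ (Δw)φ` and the `H²` solvability of the Dirichlet–Laplace problem. -/
theorem flux_norm_sup_inf_eq_laplacian_form
    {L2 E H W : Type*}
    [NormedAddCommGroup L2] [InnerProductSpace ℝ L2] [CompleteSpace L2]
    [NormedAddCommGroup E] [InnerProductSpace ℝ E] [CompleteSpace E]
    [AddCommGroup H] [Module ℝ H] [AddCommGroup W] [Module ℝ W]
    (G : H →ₗ[ℝ] E) (hGinj : Function.Injective G) (ι : H →ₗ[ℝ] L2)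
    (Kpot : Submodule ℝ E) [Kpot.HasOrthogonalProjection]
    (hK : Kpot = (LinearMap.range G).topologicalClosure)
    (A : E →ₗ[ℝ] E) (lmin lmax : ℝ) (hlmin : 0 < lmin)
    (hsym : ∀ ξ η : E, ⟪A ξ, η⟫ = ⟪ξ, A η⟫)
    (hell₁ : ∀ ξ : E, lmin * ‖ξ‖ ^ 2 ≤ ⟪ξ, A ξ⟫)
    (hell₂ : ∀ ξ : E, ⟪ξ, A ξ⟫ ≤ lmax * ‖ξ‖ ^ 2)
    (sol : L2 → H)
    (hsol : ∀ (f : L2) (φ : H), ⟪A (G (sol f)), G φ⟫ = ⟪f, ι φ⟫)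
    (j : W →ₗ[ℝ] H) (lap : W →ₗ[ℝ] L2)
    (hlap : ∀ (w : W) (φ : H), ⟪G (j w), G φ⟫ = -⟪lap w, ι φ⟫)
    (hreg : ∀ f : L2, ∃ w : W, lap w = -f)
    (V : Submodule ℝ H) (hV : FiniteDimensional ℝ V) :
    (⨆ f : L2, ⨅ v : V,
        ‖(Submodule.orthogonalProjectionOnto Kpot (A (G (sol f - (v : H)))) : E)‖ / ‖f‖)
      = ⨆ w : W, ⨅ v : V,
          ‖(Submodule.orthogonalProjectionOnto Kpot (G (j w) - A (G (v : H))) : E)‖ / ‖lap w‖ :=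
  flux_norm_sup_inf_eq_laplacian_form_general G ι Kpot hK A sol hsol j lap hlap hreg V
end

section
/- (Transfer property of the flux norm) Let V, V′ be finite-dimensional subspaces of H¹₀(Ω), and a, a′ two symmetric uniformly elliptic L^∞ coefficient matrices. For f ∈ L²(Ω) let u solve −div(a∇u) = f and u′ solve −div(a′∇u′) = f, both with zero Dirichlet boundary conditions. If span{div(a∇v) : v ∈ V} = span{div(a′∇v′) : v′ ∈ V′} (as subspaces of H^{−1}(Ω)), then sup_{f∈L²} inf_{v∈V} ‖u−v‖_{a-flux}/‖f‖_{L²} = sup_{f∈L²} inf_{v∈V′} ‖u′−v‖_{a′-flux}/‖f‖_{L²}. -/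
open RealInnerProductSpace

/-! The pairing of `a∇(u - v)` with a gradient `∇φ` equals `⟪f, φ⟫ - ⟪a∇v, ∇φ⟫`, so it depends
on `v` only through `div(a∇v)`. As `L²_pot` is the closure of the gradients, the flux of `u - v` is
determined by `f` and `div(a∇v)` alone; the hypothesis on the spans thus makes the two families of
fluxes coincide as sets, and so do their infima. -/

theorem Submodule.orthogonalProjectionOnto_topologicalClosure_eq_of_inner_eq
    {𝕜 E : Type*} [RCLike 𝕜] [NormedAddCommGroup E] [InnerProductSpace 𝕜 E]
    (K : Submodule 𝕜 E) [K.topologicalClosure.HasOrthogonalProjection] {ξ ξ' : E}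
    (h : ∀ u ∈ K, inner 𝕜 ξ u = inner 𝕜 ξ' u) :
    K.topologicalClosure.orthogonalProjectionOnto ξ
      = K.topologicalClosure.orthogonalProjectionOnto ξ' := by
  rw [← sub_eq_zero, ← map_sub, Submodule.orthogonalProjectionOnto_eq_zero_iff,
    Submodule.orthogonal_closure, Submodule.mem_orthogonal']
  intro u hu
  rw [inner_sub_left, h u hu, sub_self]

theorem ciInf_comp_eq_of_range_eq {α β ι κ : Type*} [ConditionallyCompleteLattice β]
    (F : α → β) {g : ι → α} {g' : κ → α} (h : Set.range g = Set.range g') :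
    ⨅ i, F (g i) = ⨅ k, F (g' k) := by
  change sInf (Set.range (F ∘ g)) = sInf (Set.range (F ∘ g'))
  rw [Set.range_comp, Set.range_comp, h]

theorem flux_norm_transfer_property_general
    {L2 E H : Type*}
    [NormedAddCommGroup L2] [InnerProductSpace ℝ L2]
    [NormedAddCommGroup E] [InnerProductSpace ℝ E]
    [AddCommGroup H] [Module ℝ H]
    (G : H →ₗ[ℝ] E) (ι : H →ₗ[ℝ] L2)
    (Kpot : Submodule ℝ E) [Kpot.HasOrthogonalProjection]
    (hK : Kpot = (LinearMap.range G).topologicalClosure)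
    (A A' : E →ₗ[ℝ] E)
    (sol sol' : L2 → H)
    (hsol : ∀ (f : L2) (φ : H), ⟪A (G (sol f)), G φ⟫ = ⟪f, ι φ⟫)
    (hsol' : ∀ (f : L2) (φ : H), ⟪A' (G (sol' f)), G φ⟫ = ⟪f, ι φ⟫)
    (V V' : Submodule ℝ H)
    (hspan₁ : ∀ v ∈ V, ∃ v' ∈ V', ∀ φ : H, ⟪A (G v), G φ⟫ = ⟪A' (G v'), G φ⟫)
    (hspan₂ : ∀ v' ∈ V', ∃ v ∈ V, ∀ φ : H, ⟪A (G v), G φ⟫ = ⟪A' (G v'), G φ⟫) :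
    (⨆ f : L2, ⨅ v : V,
        ‖(Submodule.orthogonalProjectionOnto Kpot (A (G (sol f - (v : H)))) : E)‖ / ‖f‖)
      = ⨆ f : L2, ⨅ v : V',
          ‖(Submodule.orthogonalProjectionOnto Kpot (A' (G (sol' f - (v : H)))) : E)‖ / ‖f‖ := by
  subst hK
  refine iSup_congr fun f => ?_
  have flux_eq : ∀ v v' : H, (∀ φ : H, ⟪A (G v), G φ⟫ = ⟪A' (G v'), G φ⟫) →
      (LinearMap.range G).topologicalClosure.orthogonalProjectionOnto (A (G (sol f - v)))
        = (LinearMap.range G).topologicalClosure.orthogonalProjectionOnto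
            (A' (G (sol' f - v'))) := by
    intro v v' hvv'
    refine Submodule.orthogonalProjectionOnto_topologicalClosure_eq_of_inner_eq _ ?_
    rintro _ ⟨φ, rfl⟩
    simp only [map_sub, inner_sub_left, hsol f φ, hsol' f φ, hvv' φ]
  refine ciInf_comp_eq_of_range_eq
    (fun ξ : (LinearMap.range G).topologicalClosure => ‖(ξ : E)‖ / ‖f‖) ?_
  ext ξ
  constructor
  · rintro ⟨⟨v, hv⟩, rfl⟩
    obtain ⟨v', hv', hvv'⟩ := hspan₁ v hv
    exact ⟨⟨v', hv'⟩, (flux_eq v v' hvv').symm⟩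
  · rintro ⟨⟨v', hv'⟩, rfl⟩
    obtain ⟨v, hv, hvv'⟩ := hspan₂ v' hv'
    exact ⟨⟨v, hv⟩, flux_eq v v' hvv'⟩

/-- Transfer property of the flux norm: if `V`, `V'` are finite dimensional
subspaces of `H¹₀(Ω)` and `a`, `a'` two symmetric uniformly elliptic `L^∞` coefficient
matrices such that `span{div(a∇v) : v ∈ V} = span{div(a'∇v') : v' ∈ V'}` in `H⁻¹(Ω)`,
then `sup_{f∈L²} inf_{v∈V} ‖u−v‖_{a-flux}/‖f‖ = sup_{f∈L²} inf_{v∈V'} ‖u'−v‖_{a'-flux}/‖f‖`,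
where `u`, `u'` solve `-div(a∇u) = f`, `-div(a'∇u') = f` with zero Dirichlet data.

Abstract encoding: `L2 = L²(Ω)`, `E = (L²(Ω))^d`, `H = H¹₀(Ω)` with gradient `G` and
embedding `ι`; `Kpot = L²_pot(Ω)`; `A`, `A'` are multiplication by `a`, `a'`; `sol`, `sol'`
the weak solution operators. Since the images `{div(a∇v) : v ∈ V}` of the subspaces
`V`, `V'` under the (linear) maps `v ↦ div(a∇v)` are already linear subspaces of `H⁻¹(Ω)`,
the equality of their spans is expressed as mutual inclusion, the distribution `div(a∇v)`
being encoded by its pairings `φ ↦ -⟪a∇v, ∇φ⟫` against `φ ∈ H¹₀(Ω)`. -/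
theorem flux_norm_transfer_property
    {L2 E H : Type*}
    [NormedAddCommGroup L2] [InnerProductSpace ℝ L2] [CompleteSpace L2]
    [NormedAddCommGroup E] [InnerProductSpace ℝ E] [CompleteSpace E]
    [AddCommGroup H] [Module ℝ H]
    (G : H →ₗ[ℝ] E) (hGinj : Function.Injective G) (ι : H →ₗ[ℝ] L2)
    (Kpot : Submodule ℝ E) [Kpot.HasOrthogonalProjection]
    (hK : Kpot = (LinearMap.range G).topologicalClosure)
    (A A' : E →ₗ[ℝ] E) (lmin lmax : ℝ) (hlmin : 0 < lmin)
    (hsym : ∀ ξ η : E, ⟪A ξ, η⟫ = ⟪ξ, A η⟫)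
    (hsym' : ∀ ξ η : E, ⟪A' ξ, η⟫ = ⟪ξ, A' η⟫)
    (hell₁ : ∀ ξ : E, lmin * ‖ξ‖ ^ 2 ≤ ⟪ξ, A ξ⟫)
    (hell₂ : ∀ ξ : E, ⟪ξ, A ξ⟫ ≤ lmax * ‖ξ‖ ^ 2)
    (hell₁' : ∀ ξ : E, lmin * ‖ξ‖ ^ 2 ≤ ⟪ξ, A' ξ⟫)
    (hell₂' : ∀ ξ : E, ⟪ξ, A' ξ⟫ ≤ lmax * ‖ξ‖ ^ 2)
    (sol sol' : L2 → H)
    (hsol : ∀ (f : L2) (φ : H), ⟪A (G (sol f)), G φ⟫ = ⟪f, ι φ⟫)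
    (hsol' : ∀ (f : L2) (φ : H), ⟪A' (G (sol' f)), G φ⟫ = ⟪f, ι φ⟫)
    (V V' : Submodule ℝ H) (hV : FiniteDimensional ℝ V) (hV' : FiniteDimensional ℝ V')
    (hspan₁ : ∀ v ∈ V, ∃ v' ∈ V', ∀ φ : H, ⟪A (G v), G φ⟫ = ⟪A' (G v'), G φ⟫)
    (hspan₂ : ∀ v' ∈ V', ∃ v ∈ V, ∀ φ : H, ⟪A (G v), G φ⟫ = ⟪A' (G v'), G φ⟫) :
    (⨆ f : L2, ⨅ v : V,
        ‖(Submodule.orthogonalProjectionOnto Kpot (A (G (sol f - (v : H)))) : E)‖ / ‖f‖)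
      = ⨆ f : L2, ⨅ v : V',
          ‖(Submodule.orthogonalProjectionOnto Kpot (A' (G (sol' f - (v : H)))) : E)‖ / ‖f‖ :=
  flux_norm_transfer_property_general G ι Kpot hK A A' sol sol' hsol hsol' V V' hspan₁ hspan₂
end

section
/- (Pointwise transfer property) Let V, V′ be finite-dimensional subspaces of H¹₀(Ω) with span{div(a∇v) : v ∈ V} = span{div(a′∇v′) : v′ ∈ V′}. For a fixed f ∈ L²(Ω), let u and u′ solve −div(a∇u) = f and −div(a′∇u′) = f respectively with zero Dirichlet conditions. Then inf_{v∈V} ‖u − v‖_{a-flux} = inf_{v∈V′} ‖u′ − v‖_{a′-flux}. This follows from the identity ‖u − v‖_{a-flux} = ‖∇Δ^{−1}(f + div(a∇v))‖_{L²}. -/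
/-!
Write `P` for the orthogonal projection onto `L²_pot = closure (range ∇)`. Testing against
gradients, `P (a∇(u - v))` is the potential field `ξ` with `⟪ξ, ∇φ⟫ = ⟪f, φ⟫ - ⟪a∇v, ∇φ⟫`,
and a potential field is determined by its inner products with gradients since these are
dense in `L²_pot`. This is the identity `‖u - v‖_{a-flux} = ‖∇Δ⁻¹(f + div(a∇v))‖`, and it
shows that the right-hand side depends on `v` only through the functional `φ ↦ ⟪a∇v, ∇φ⟫`.
Hence matched pairs `v ∈ V`, `v' ∈ V'` have equal flux errors, the sets of flux errors
over `V` and over `V'` coincide, and so do their infima.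
-/

open RealInnerProductSpace

theorem Submodule.eq_of_mem_topologicalClosure_of_forall_inner_eq {𝕜 E : Type*} [RCLike 𝕜]
    [NormedAddCommGroup E] [InnerProductSpace 𝕜 E] {S : Submodule 𝕜 E} {x y : E}
    (hx : x ∈ S.topologicalClosure) (hy : y ∈ S.topologicalClosure)
    (h : ∀ s ∈ S, inner 𝕜 x s = inner 𝕜 y s) : x = y := by
  have hperp : x - y ∈ S.topologicalClosureᗮ := by
    rw [S.orthogonal_closure, Submodule.mem_orthogonal']
    intro s hs
    rw [inner_sub_left, h s hs, sub_self]
  have hzero : x - y ∈ (⊥ : Submodule 𝕜 E) :=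
    S.topologicalClosure.orthogonal_disjoint.le_bot ⟨S.topologicalClosure.sub_mem hx hy, hperp⟩
  exact sub_eq_zero.mp hzero

section FluxProjection

variable {L2 E H : Type*} [NormedAddCommGroup L2] [InnerProductSpace ℝ L2]
  [NormedAddCommGroup E] [InnerProductSpace ℝ E] [AddCommGroup H] [Module ℝ H]
  {G : H →ₗ[ℝ] E} {ι : H →ₗ[ℝ] L2}
  [(LinearMap.range G).topologicalClosure.HasOrthogonalProjection]
  {A : E →ₗ[ℝ] E} {sol : L2 → H}

theorem inner_orthogonalProjectionOnto_flux
    (hsol : ∀ (f : L2) (φ : H), ⟪A (G (sol f)), G φ⟫ = ⟪f, ι φ⟫) (f : L2) (v φ : H) :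
    ⟪((LinearMap.range G).topologicalClosure.orthogonalProjectionOnto (A (G (sol f - v))) : E),
      G φ⟫ = ⟪f, ι φ⟫ - ⟪A (G v), G φ⟫ := by
  have hGφ : G φ ∈ (LinearMap.range G).topologicalClosure :=
    Submodule.le_topologicalClosure _ (LinearMap.mem_range_self G φ)
  rw [← hsol f φ, ← inner_sub_left, ← map_sub, ← map_sub]
  exact Submodule.inner_orthogonalProjectionOnto_eq_of_mem_right ⟨G φ, hGφ⟩ _

theorem orthogonalProjectionOnto_flux_eq_of_weak
    (hsol : ∀ (f : L2) (φ : H), ⟪A (G (sol f)), G φ⟫ = ⟪f, ι φ⟫) {f : L2} {v : H} {ξ : E}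
    (hξ : ξ ∈ (LinearMap.range G).topologicalClosure)
    (hweak : ∀ φ : H, ⟪ξ, G φ⟫ = ⟪f, ι φ⟫ - ⟪A (G v), G φ⟫) :
    ((LinearMap.range G).topologicalClosure.orthogonalProjectionOnto (A (G (sol f - v))) : E)
      = ξ := by
  refine Submodule.eq_of_mem_topologicalClosure_of_forall_inner_eq (Submodule.coe_mem _) hξ ?_
  rintro _ ⟨φ, rfl⟩
  rw [inner_orthogonalProjectionOnto_flux hsol, hweak]

end FluxProjection

theorem flux_norm_pointwise_transfer_general
    {L2 E H : Type*}
    [NormedAddCommGroup L2] [InnerProductSpace ℝ L2]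
    [NormedAddCommGroup E] [InnerProductSpace ℝ E]
    [AddCommGroup H] [Module ℝ H]
    (G : H →ₗ[ℝ] E) (ι : H →ₗ[ℝ] L2)
    (Kpot : Submodule ℝ E) [Submodule.HasOrthogonalProjection Kpot]
    (hK : Kpot = (LinearMap.range G).topologicalClosure)
    (A A' : E →ₗ[ℝ] E)
    (sol sol' : L2 → H)
    (hsol : ∀ (f : L2) (φ : H), ⟪A (G (sol f)), G φ⟫ = ⟪f, ι φ⟫)
    (hsol' : ∀ (f : L2) (φ : H), ⟪A' (G (sol' f)), G φ⟫ = ⟪f, ι φ⟫)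
    (V V' : Submodule ℝ H)
    (hspan₁ : ∀ v ∈ V, ∃ v' ∈ V', ∀ φ : H, ⟪A (G v), G φ⟫ = ⟪A' (G v'), G φ⟫)
    (hspan₂ : ∀ v' ∈ V', ∃ v ∈ V, ∀ φ : H, ⟪A (G v), G φ⟫ = ⟪A' (G v'), G φ⟫)
    (f : L2) :
    (⨅ v : V, ‖(Submodule.orthogonalProjectionOnto Kpot (A (G (sol f - (v : H)))) : E)‖)
      = (⨅ v : V', ‖(Submodule.orthogonalProjectionOnto Kpot (A' (G (sol' f - (v : H)))) : E)‖) ∧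
    ∀ (v : H) (ξ : E), ξ ∈ Kpot →
      (∀ φ : H, ⟪ξ, G φ⟫ = ⟪f, ι φ⟫ - ⟪A (G v), G φ⟫) →
      ‖(Submodule.orthogonalProjectionOnto Kpot (A (G (sol f - v))) : E)‖ = ‖ξ‖ := by
  subst hK
  have hmatch : ∀ v v' : H, (∀ φ : H, ⟪A (G v), G φ⟫ = ⟪A' (G v'), G φ⟫) →
      ‖((LinearMap.range G).topologicalClosure.orthogonalProjectionOnto (A (G (sol f - v))) : E)‖
        = ‖((LinearMap.range G).topologicalClosure.orthogonalProjectionOnto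
            (A' (G (sol' f - v'))) : E)‖ := fun v v' h =>
    congrArg norm <| orthogonalProjectionOnto_flux_eq_of_weak hsol (Submodule.coe_mem _)
      fun φ => by rw [inner_orthogonalProjectionOnto_flux hsol', h]
  refine ⟨congrArg sInf (Set.Subset.antisymm ?_ ?_), fun v ξ hξ hweak =>
    congrArg norm (orthogonalProjectionOnto_flux_eq_of_weak hsol hξ hweak)⟩
  · rintro _ ⟨v, rfl⟩
    obtain ⟨v', hv', hvv'⟩ := hspan₁ v v.2
    exact ⟨⟨v', hv'⟩, (hmatch v v' hvv').symm⟩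
  · rintro _ ⟨v', rfl⟩
    obtain ⟨v, hv, hvv'⟩ := hspan₂ v' v'.2
    exact ⟨⟨v, hv⟩, hmatch v v' hvv'⟩

/-- Pointwise transfer property: in the setting of the transfer property
(`span{div(a∇v) : v ∈ V} = span{div(a'∇v') : v' ∈ V'}`), for a fixed `f ∈ L²(Ω)`,
`inf_{v∈V} ‖u − v‖_{a-flux} = inf_{v∈V'} ‖u' − v‖_{a'-flux}`, where `u`, `u'` solve
`-div(a∇u) = f = -div(a'∇u')` with zero Dirichlet data; moreover
`‖u − v‖_{a-flux} = ‖∇Δ⁻¹(f + div(a∇v))‖_{L²}`, where `∇Δ⁻¹(f + div(a∇v))` is the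
potential field `ξ ∈ L²_pot(Ω)` with `-div ξ = f + div(a∇v)` weakly, i.e.
`⟪ξ, ∇φ⟫ = ⟪f, φ⟫ − ⟪a∇v, ∇φ⟫` for all `φ ∈ H¹₀(Ω)`.

Abstract encoding as in the transfer property: `L2 = L²(Ω)`, `E = (L²(Ω))^d`,
`H = H¹₀(Ω)`, gradient `G`, embedding `ι`, `Kpot = L²_pot(Ω)` the closure of the range
of `G`, `A`, `A'` multiplication by `a`, `a'`, and `sol`, `sol'` the weak solution
operators. -/
theorem flux_norm_pointwise_transfer
    {L2 E H : Type*}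
    [NormedAddCommGroup L2] [InnerProductSpace ℝ L2] [CompleteSpace L2]
    [NormedAddCommGroup E] [InnerProductSpace ℝ E] [CompleteSpace E]
    [AddCommGroup H] [Module ℝ H]
    (G : H →ₗ[ℝ] E) (hGinj : Function.Injective G) (ι : H →ₗ[ℝ] L2)
    (Kpot : Submodule ℝ E) [Submodule.HasOrthogonalProjection Kpot]
    (hK : Kpot = (LinearMap.range G).topologicalClosure)
    (A A' : E →ₗ[ℝ] E) (lmin lmax : ℝ) (hlmin : 0 < lmin)
    (hsym : ∀ ξ η : E, ⟪A ξ, η⟫ = ⟪ξ, A η⟫)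
    (hsym' : ∀ ξ η : E, ⟪A' ξ, η⟫ = ⟪ξ, A' η⟫)
    (hell₁ : ∀ ξ : E, lmin * ‖ξ‖ ^ 2 ≤ ⟪ξ, A ξ⟫)
    (hell₂ : ∀ ξ : E, ⟪ξ, A ξ⟫ ≤ lmax * ‖ξ‖ ^ 2)
    (hell₁' : ∀ ξ : E, lmin * ‖ξ‖ ^ 2 ≤ ⟪ξ, A' ξ⟫)
    (hell₂' : ∀ ξ : E, ⟪ξ, A' ξ⟫ ≤ lmax * ‖ξ‖ ^ 2)
    (sol sol' : L2 → H)
    (hsol : ∀ (f : L2) (φ : H), ⟪A (G (sol f)), G φ⟫ = ⟪f, ι φ⟫)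
    (hsol' : ∀ (f : L2) (φ : H), ⟪A' (G (sol' f)), G φ⟫ = ⟪f, ι φ⟫)
    (V V' : Submodule ℝ H) (hV : FiniteDimensional ℝ V) (hV' : FiniteDimensional ℝ V')
    (hspan₁ : ∀ v ∈ V, ∃ v' ∈ V', ∀ φ : H, ⟪A (G v), G φ⟫ = ⟪A' (G v'), G φ⟫)
    (hspan₂ : ∀ v' ∈ V', ∃ v ∈ V, ∀ φ : H, ⟪A (G v), G φ⟫ = ⟪A' (G v'), G φ⟫)
    (f : L2) :
    (⨅ v : V, ‖(Submodule.orthogonalProjectionOnto Kpot (A (G (sol f - (v : H)))) : E)‖)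
      = (⨅ v : V', ‖(Submodule.orthogonalProjectionOnto Kpot (A' (G (sol' f - (v : H)))) : E)‖) ∧
    ∀ (v : H) (ξ : E), ξ ∈ Kpot →
      (∀ φ : H, ⟪ξ, G φ⟫ = ⟪f, ι φ⟫ - ⟪A (G v), G φ⟫) →
      ‖(Submodule.orthogonalProjectionOnto Kpot (A (G (sol f - v))) : E)‖ = ‖ξ‖ :=
  flux_norm_pointwise_transfer_general G ι Kpot hK A A' sol sol' hsol hsol' V V' hspan₁ hspan₂ f
end

section
/- For a finite dimensional subspace V of H¹₀(Ω), define (div a∇V)^⊥ := {z ∈ H¹₀(Ω) : (∇z, a∇v)_{L²} = 0 for all v ∈ V}. For f ∈ L²(Ω) let u solve −div(a∇u) = f with zero Dirichlet data. Then sup_{f∈L²(Ω)} inf_{v∈V} ‖u−v‖_{a-flux}/‖f‖_{L²} = sup_{z ∈ (div a∇V)^⊥} ‖z‖_{L²}/‖∇z‖_{L²}. -/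
/-!
Testing the flux `P_K(a∇(u - v))` against `∇z`, for `z` in `(div a∇V)^⊥` and `f = z`, gives
`(flux, ∇z) = ‖z‖²`, whence `≥`. For `≤`, choose `v₀ ∈ V` whose flux `Q` is orthogonal to the
fluxes of `V`. Then `Q ∈ L²_pot` is `a`-orthogonal to `∇V`, so `Q` is a limit of gradients `∇z`
with `z ∈ (div a∇V)^⊥`: subtract from approximating gradients their `a`-Galerkin projections onto
the finite dimensional `∇V`, which depend continuously on the gradient and vanish at `Q`. On these
`(Q, ∇z) = (f, z) ≤ C ‖f‖ ‖∇z‖`, and in the limit `‖Q‖² ≤ C ‖f‖ ‖Q‖`.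
-/

open RealInnerProductSpace

theorem Real.iSup_eq_iSup_of_forall_exists_le {α β : Type*} [Nonempty α] [Nonempty β]
    (s : α → ℝ) (t : β → ℝ) (hts : ∀ b, ∃ a, t b ≤ s a)
    (hst : BddAbove (Set.range t) → ∀ a, s a ≤ ⨆ b, t b) :
    ⨆ a, s a = ⨆ b, t b := by
  by_cases ht : BddAbove (Set.range t)
  · have hs : BddAbove (Set.range s) := ⟨_, Set.forall_mem_range.2 (hst ht)⟩
    refine le_antisymm (ciSup_le (hst ht)) (ciSup_le fun b => ?_)
    obtain ⟨a, ha⟩ := hts b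
    exact ha.trans (le_ciSup hs a)
  · have hs : ¬ BddAbove (Set.range s) := fun ⟨M, hM⟩ =>
      ht ⟨M, Set.forall_mem_range.2 fun b =>
        let ⟨a, ha⟩ := hts b; ha.trans (hM ⟨a, rfl⟩)⟩
    rw [Real.iSup_of_not_bddAbove hs, Real.iSup_of_not_bddAbove ht]

theorem Submodule.inner_starProjection_left_eq_of_mem {𝕜 E : Type*} [RCLike 𝕜]
    [NormedAddCommGroup E] [InnerProductSpace 𝕜 E] (K : Submodule 𝕜 E) [K.HasOrthogonalProjection]
    (x : E) {y : E} (hy : y ∈ K) : inner 𝕜 (K.starProjection x) y = inner 𝕜 x y := by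
  rw [K.inner_starProjection_left_eq_right, K.starProjection_eq_self_iff.2 hy]

section Galerkin

variable {E : Type*} [NormedAddCommGroup E] [InnerProductSpace ℝ E]

theorem exists_continuousLinearMap_inner_sub_map_eq_zero (A : E →ₗ[ℝ] E) (F : Submodule ℝ E)
    [FiniteDimensional ℝ F] (hA : ∀ ξ ∈ F, ⟪ξ, A ξ⟫ = 0 → ξ = 0) :
    ∃ P : E →L[ℝ] F, ∀ x, ∀ w ∈ F, ⟪x - P x, A w⟫ = 0 := by
  -- `P = (π_U|_F)⁻¹ ∘ π_U` for `U = A F`: `π_U|_F` is injective by definiteness, hence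
  -- bijective since `dim U ≤ dim F`.
  set U := F.map A
  have hπ : ∀ x, ∀ u ∈ U, ⟪x, u⟫ = ⟪U.starProjection x, u⟫ := fun x u hu =>
    (U.inner_orthogonalProjectionOnto_eq_of_mem_right ⟨u, hu⟩ x).symm
  let L : F →ₗ[ℝ] U := U.orthogonalProjectionOnto.toLinearMap ∘ₗ F.subtype
  have hL : Function.Injective L := by
    refine (injective_iff_map_eq_zero L).2 fun p hp => Subtype.ext (hA p p.2 ?_)
    have hp' : U.starProjection (p : E) = 0 := congrArg Subtype.val hp
    rw [hπ p _ (Submodule.mem_map_of_mem p.2), hp', inner_zero_left]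
  have hrank : Module.finrank ℝ F = Module.finrank ℝ U :=
    le_antisymm (LinearMap.finrank_le_finrank_of_injective hL) (Submodule.finrank_map_le A F)
  let e := LinearEquiv.ofBijective L
    ⟨hL, (LinearMap.injective_iff_surjective_of_finrank_eq_finrank hrank).1 hL⟩
  let P := LinearMap.toContinuousLinearMap (e.symm : U →ₗ[ℝ] F) ∘L U.orthogonalProjectionOnto
  refine ⟨P, fun x w hw => ?_⟩
  have hPx : U.starProjection (P x : E) = U.starProjection x :=
    congrArg Subtype.val (e.apply_symm_apply (U.orthogonalProjectionOnto x))
  have hAw := Submodule.mem_map_of_mem (f := A) hw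
  rw [inner_sub_left, hπ x _ hAw, hπ (P x) _ hAw, hPx, sub_self]

theorem mem_closure_setOf_inner_map_eq_zero (A : E →ₗ[ℝ] E) {D F : Submodule ℝ E}
    [FiniteDimensional ℝ F] (hFD : F ≤ D) (hA : ∀ ξ ∈ F, ⟪ξ, A ξ⟫ = 0 → ξ = 0) {x : E}
    (hx : x ∈ closure (D : Set E)) (hxF : ∀ w ∈ F, ⟪x, A w⟫ = 0) :
    x ∈ closure {y | y ∈ D ∧ ∀ w ∈ F, ⟪y, A w⟫ = 0} := by
  obtain ⟨P, hP⟩ := exists_continuousLinearMap_inner_sub_map_eq_zero A F hA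
  have hPx : P x = 0 := by
    refine Subtype.ext (hA _ (P x).2 ?_)
    have h := hP x _ (P x).2
    rwa [inner_sub_left, hxF _ (P x).2, zero_sub, neg_eq_zero] at h
  -- `x` is a fixed point of `y ↦ y - P y`, which maps `D` into the set
  have hmaps : Set.MapsTo (fun y => y - (P y : E)) D {y | y ∈ D ∧ ∀ w ∈ F, ⟪y, A w⟫ = 0} :=
    fun y hy => ⟨D.sub_mem hy (hFD (P y).2), hP y⟩
  simpa [hPx] using map_mem_closure (by fun_prop) hx hmaps

end Galerkin

theorem exists_mem_forall_inner_sub_map_eq_zero {E H : Type*} [NormedAddCommGroup E]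
    [InnerProductSpace ℝ E] [AddCommGroup H] [Module ℝ H] (T : H →ₗ[ℝ] E) (V : Submodule ℝ H)
    [FiniteDimensional ℝ V] (y : E) : ∃ v₀ ∈ V, ∀ v ∈ V, ⟪y - T v₀, T v⟫ = 0 := by
  obtain ⟨v₀, hv₀, hTv₀⟩ := Submodule.mem_map.1 ((V.map T).starProjection_apply_mem y)
  exact ⟨v₀, hv₀, fun v hv => hTv₀ ▸
    (V.map T).starProjection_inner_eq_zero y _ (Submodule.mem_map_of_mem hv)⟩

section Flux

variable {L2 E H : Type*} [NormedAddCommGroup L2] [InnerProductSpace ℝ L2]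
  [NormedAddCommGroup E] [InnerProductSpace ℝ E] [AddCommGroup H] [Module ℝ H]
  {G : H →ₗ[ℝ] E} {ι : H →ₗ[ℝ] L2} {K : Submodule ℝ E} [K.HasOrthogonalProjection]
  {A : E →ₗ[ℝ] E} {sol : L2 → H} {V : Submodule ℝ H}

theorem inner_starProjection_map_sol_sub_eq_inner (hGK : LinearMap.range G ≤ K)
    (hsol : ∀ (f : L2) (φ : H), ⟪A (G (sol f)), G φ⟫ = ⟪f, ι φ⟫)
    {z : H} (hz : ∀ v ∈ V, ⟪G z, A (G v)⟫ = 0) (f : L2) {v : H} (hv : v ∈ V) :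
    ⟪K.starProjection (A (G (sol f - v))), G z⟫ = ⟪f, ι z⟫ := by
  rw [K.inner_starProjection_left_eq_of_mem _ (hGK ⟨z, rfl⟩), map_sub, map_sub, inner_sub_left,
    hsol, real_inner_comm (G z), hz v hv, sub_zero]

theorem div_le_iInf_norm_flux_div (hGK : LinearMap.range G ≤ K)
    (hsol : ∀ (f : L2) (φ : H), ⟪A (G (sol f)), G φ⟫ = ⟪f, ι φ⟫)
    {z : H} (hz : ∀ v ∈ V, ⟪G z, A (G v)⟫ = 0) :
    ‖ι z‖ / ‖G z‖ ≤ ⨅ v : V, ‖K.starProjection (A (G (sol (ι z) - v)))‖ / ‖ι z‖ := by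
  rcases eq_or_ne (ι z) 0 with hιz | hιz
  · simp [hιz]
  refine le_ciInf fun v => ?_
  have hflux : ⟪K.starProjection (A (G (sol (ι z) - v))), G z⟫ = ‖ι z‖ ^ 2 := by
    rw [inner_starProjection_map_sol_sub_eq_inner hGK hsol hz _ v.2, real_inner_self_eq_norm_sq]
  have hsq : ‖ι z‖ ^ 2 ≤ ‖K.starProjection (A (G (sol (ι z) - v)))‖ * ‖G z‖ :=
    hflux ▸ real_inner_le_norm _ _
  rcases eq_or_ne (G z) 0 with hGz | hGz
  · rw [hGz, norm_zero, div_zero]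
    positivity
  rw [div_le_div_iff₀ (norm_pos_iff.2 hGz) (norm_pos_iff.2 hιz)]
  nlinarith

theorem exists_mem_norm_flux_le (hK : K = (LinearMap.range G).topologicalClosure)
    (hA : ∀ ξ, ⟪ξ, A ξ⟫ = 0 → ξ = 0) [FiniteDimensional ℝ V]
    (hsol : ∀ (f : L2) (φ : H), ⟪A (G (sol f)), G φ⟫ = ⟪f, ι φ⟫) {C : ℝ} (hC₀ : 0 ≤ C)
    (hC : ∀ z, (∀ v ∈ V, ⟪G z, A (G v)⟫ = 0) → ‖ι z‖ ≤ C * ‖G z‖) (f : L2) :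
    ∃ v₀ ∈ V, ‖K.starProjection (A (G (sol f - v₀)))‖ ≤ C * ‖f‖ := by
  have hGK : LinearMap.range G ≤ K := hK ▸ Submodule.le_topologicalClosure _
  let T : H →ₗ[ℝ] E := K.starProjection.toLinearMap ∘ₗ A ∘ₗ G
  obtain ⟨v₀, hv₀, horth⟩ := exists_mem_forall_inner_sub_map_eq_zero T V (T (sol f))
  refine ⟨v₀, hv₀, ?_⟩
  set Q := K.starProjection (A (G (sol f - v₀)))
  have hQ : Q = T (sol f) - T v₀ := by simp [Q, T]
  have hQperp : ∀ w ∈ V.map G, ⟪Q, A w⟫ = 0 := by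
    rintro _ ⟨v, hv, rfl⟩
    have h := horth v hv
    rw [← hQ] at h
    rwa [real_inner_comm, ← K.inner_starProjection_left_eq_of_mem _
      (K.starProjection_apply_mem _), real_inner_comm]
  have hQcl : Q ∈ closure {y | y ∈ LinearMap.range G ∧ ∀ w ∈ V.map G, ⟪y, A w⟫ = 0} := by
    refine mem_closure_setOf_inner_map_eq_zero A LinearMap.map_le_range (fun ξ _ => hA ξ)
      ?_ hQperp
    rw [← Submodule.topologicalClosure_coe, ← hK]
    exact K.starProjection_apply_mem _
  have hbound : ∀ y ∈ {y | y ∈ LinearMap.range G ∧ ∀ w ∈ V.map G, ⟪y, A w⟫ = 0},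
      ⟪Q, y⟫ ≤ C * ‖f‖ * ‖y‖ := by
    rintro _ ⟨⟨z, rfl⟩, hz⟩
    have hz' : ∀ v ∈ V, ⟪G z, A (G v)⟫ = 0 := fun v hv => hz _ (Submodule.mem_map_of_mem hv)
    calc ⟪Q, G z⟫ = ⟪f, ι z⟫ := inner_starProjection_map_sol_sub_eq_inner hGK hsol hz' f hv₀
      _ ≤ ‖f‖ * ‖ι z‖ := real_inner_le_norm _ _
      _ ≤ ‖f‖ * (C * ‖G z‖) := by gcongr; exact hC z hz'
      _ = C * ‖f‖ * ‖G z‖ := by ring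
  have hclosed : IsClosed {y | ⟪Q, y⟫ ≤ C * ‖f‖ * ‖y‖} := isClosed_le (by fun_prop) (by fun_prop)
  have hQQ : ‖Q‖ ^ 2 ≤ C * ‖f‖ * ‖Q‖ := by
    have h : ⟪Q, Q⟫ ≤ C * ‖f‖ * ‖Q‖ := closure_minimal hbound hclosed hQcl
    rwa [real_inner_self_eq_norm_sq] at h
  nlinarith [norm_nonneg Q, norm_nonneg f, mul_nonneg hC₀ (norm_nonneg f)]

end Flux

/-- `L2 = L²(Ω)`, `E = (L²(Ω))^d`, `H = H¹₀(Ω)` with gradient `G` and embedding `ι` into `L²`;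
`Kpot = L²_pot(Ω)`; `A` is multiplication by `a(x)`; `sol` is the weak solution operator
of `-div(a∇·) = ·`. -/
theorem flux_norm_sup_inf_eq_poincare_constant_general
    {L2 E H : Type*}
    [NormedAddCommGroup L2] [InnerProductSpace ℝ L2]
    [NormedAddCommGroup E] [InnerProductSpace ℝ E]
    [AddCommGroup H] [Module ℝ H]
    (G : H →ₗ[ℝ] E) (hGinj : Function.Injective G) (ι : H →ₗ[ℝ] L2)
    (Kpot : Submodule ℝ E) [Submodule.HasOrthogonalProjection Kpot]
    (hK : Kpot = (LinearMap.range G).topologicalClosure)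
    (A : E →ₗ[ℝ] E) (lmin : ℝ) (hlmin : 0 < lmin)
    (hell₁ : ∀ ξ : E, lmin * ‖ξ‖ ^ 2 ≤ ⟪ξ, A ξ⟫)
    (sol : L2 → H)
    (hsol : ∀ (f : L2) (φ : H), ⟪A (G (sol f)), G φ⟫ = ⟪f, ι φ⟫)
    (V : Submodule ℝ H) (hV : FiniteDimensional ℝ V) :
    (⨆ f : L2, ⨅ v : V,
        ‖(Submodule.orthogonalProjectionOnto Kpot (A (G (sol f - (v : H)))) : E)‖ / ‖f‖)
      = ⨆ z : {z : H // ∀ v ∈ V, ⟪G z, A (G v)⟫ = 0}, ‖ι (z : H)‖ / ‖G (z : H)‖ := by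
  have : Nonempty {z : H // ∀ v ∈ V, ⟪G z, A (G v)⟫ = 0} := ⟨⟨0, fun v _ => by simp⟩⟩
  have hA : ∀ ξ : E, ⟪ξ, A ξ⟫ = 0 → ξ = 0 := fun ξ hξ => by
    by_contra hξ₀
    nlinarith [hell₁ ξ, mul_pos hlmin (pow_pos (norm_pos_iff.2 hξ₀) 2)]
  have hGK : LinearMap.range G ≤ Kpot := hK ▸ Submodule.le_topologicalClosure _
  refine Real.iSup_eq_iSup_of_forall_exists_le _ _
    (fun z => ⟨ι z, div_le_iInf_norm_flux_div hGK hsol z.2⟩) fun hbdd f => ?_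
  set C := ⨆ z : {z : H // ∀ v ∈ V, ⟪G z, A (G v)⟫ = 0}, ‖ι (z : H)‖ / ‖G (z : H)‖
  have hC₀ : 0 ≤ C := Real.iSup_nonneg fun z => by positivity
  have hC : ∀ z, (∀ v ∈ V, ⟪G z, A (G v)⟫ = 0) → ‖ι z‖ ≤ C * ‖G z‖ := by
    intro z hz
    rcases eq_or_ne z 0 with rfl | hz0
    · simp
    exact (div_le_iff₀ (norm_pos_iff.2 ((map_ne_zero_iff G hGinj).2 hz0))).1
      (le_ciSup hbdd ⟨z, hz⟩)
  obtain ⟨v₀, hv₀, hle⟩ := exists_mem_norm_flux_le hK hA hsol hC₀ hC f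
  calc _ ≤ ‖(Kpot.orthogonalProjectionOnto (A (G (sol f - v₀))) : E)‖ / ‖f‖ :=
        ciInf_le_of_le ⟨0, Set.forall_mem_range.2 fun _ => by positivity⟩ ⟨v₀, hv₀⟩ le_rfl
    _ ≤ C := div_le_of_le_mul₀ (norm_nonneg _) hC₀ hle

/-- Proposition `Csorsedfesol4` of the paper: for a finite dimensional
subspace `V` of `H¹₀(Ω)`, with `(div a∇V)^⊥ := {z ∈ H¹₀(Ω) : (∇z, a∇v)_{L²} = 0 ∀ v ∈ V}`
and `u = u(f)` the solution of `-div(a∇u) = f`,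
`sup_{f∈L²} inf_{v∈V} ‖u−v‖_{a-flux}/‖f‖_{L²}
  = sup_{z ∈ (div a∇V)^⊥} ‖z‖_{L²}/‖∇z‖_{L²}`.

Abstract encoding: `L2 = L²(Ω)`, `E = (L²(Ω))^d`, `H = H¹₀(Ω)` with gradient `G` and
embedding `ι` into `L²`; `Kpot = L²_pot(Ω)` is the closure of the range of `G`; `A` is
multiplication by the symmetric uniformly elliptic matrix `a(x)`; `sol` is the weak
solution operator of `-div(a∇·) = ·`. -/
theorem flux_norm_sup_inf_eq_poincare_constant
    {L2 E H : Type*}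
    [NormedAddCommGroup L2] [InnerProductSpace ℝ L2] [CompleteSpace L2]
    [NormedAddCommGroup E] [InnerProductSpace ℝ E] [CompleteSpace E]
    [AddCommGroup H] [Module ℝ H]
    (G : H →ₗ[ℝ] E) (hGinj : Function.Injective G) (ι : H →ₗ[ℝ] L2)
    (Kpot : Submodule ℝ E) [Submodule.HasOrthogonalProjection Kpot]
    (hK : Kpot = (LinearMap.range G).topologicalClosure)
    (A : E →ₗ[ℝ] E) (lmin lmax : ℝ) (hlmin : 0 < lmin)
    (hsym : ∀ ξ η : E, ⟪A ξ, η⟫ = ⟪ξ, A η⟫)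
    (hell₁ : ∀ ξ : E, lmin * ‖ξ‖ ^ 2 ≤ ⟪ξ, A ξ⟫)
    (hell₂ : ∀ ξ : E, ⟪ξ, A ξ⟫ ≤ lmax * ‖ξ‖ ^ 2)
    (sol : L2 → H)
    (hsol : ∀ (f : L2) (φ : H), ⟪A (G (sol f)), G φ⟫ = ⟪f, ι φ⟫)
    (V : Submodule ℝ H) (hV : FiniteDimensional ℝ V) :
    (⨆ f : L2, ⨅ v : V,
        ‖(Submodule.orthogonalProjectionOnto Kpot (A (G (sol f - (v : H)))) : E)‖ / ‖f‖)
      = ⨆ z : {z : H // ∀ v ∈ V, ⟪G z, A (G v)⟫ = 0}, ‖ι (z : H)‖ / ‖G (z : H)‖ :=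
  flux_norm_sup_inf_eq_poincare_constant_general G hGinj ι Kpot hK A lmin hlmin hell₁ sol hsol V hV
end

section
/- Let Ψ_k and λ_k (k ≥ 1, ordered increasingly) be the Dirichlet eigenfunctions and eigenvalues of −Δ on Ω. Then for every N ≥ 1, inf over all N-dimensional subspaces V of H¹₀(Ω) of sup_{f ∈ L²(Ω)} inf_{v∈V} ‖u − v‖_{a-flux}/‖f‖_{L²} equals 1/√(λ_{N+1}), where u is the solution of −div(a∇u) = f with zero Dirichlet conditions. The infimum is achieved by the space spanned by θ_1,…,θ_N where −div(a∇θ_k) = λ_kΨ_k with zero Dirichlet conditions. -/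
open RealInnerProductSpace

/-! The potential part `T f = (a∇u)_pot` of the flux does not see `a`: it is the element of
`L²_pot = closure (range ∇)` whose pairing with `∇φ` is `⟪f, φ⟫`. On the eigenbasis
`T (λ_k Ψ_k) = ∇Ψ_k`, so the vectors `√λ_k T Ψ_k` are orthonormal, and pairing against gradients
(Parseval, Cauchy–Schwarz and Bessel) gives `‖T h‖ ≤ ‖h‖ / √λ_{N+1}` whenever `h ⊥ Ψ_1, …, Ψ_N`.
Approximating `T f` from `T (span {Ψ_1, …, Ψ_N})`, which is the flux image of `span {θ_k}`, thus
costs at most `‖f‖ / √λ_{N+1}`. Conversely, for any `N`-dimensional `V` a dimension count gives a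
nonzero `f ∈ span {Ψ_1, …, Ψ_{N+1}}` with `T f` orthogonal to the flux image of `V`, and the error
for this `f` is at least `‖T f‖ ≥ ‖f‖ / √λ_{N+1}`. -/

namespace Submodule

variable {E : Type*} [NormedAddCommGroup E] [InnerProductSpace ℝ E]

theorem eq_of_mem_topologicalClosure_of_inner_eq {S : Submodule ℝ E} {x y : E}
    (hx : x ∈ S.topologicalClosure) (hy : y ∈ S.topologicalClosure)
    (h : ∀ s ∈ S, ⟪x, s⟫ = ⟪y, s⟫) : x = y := by
  have hperp : x - y ∈ S.topologicalClosureᗮ := by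
    rw [orthogonal_closure, mem_orthogonal']
    intro s hs
    rw [inner_sub_left, h s hs, sub_self]
  have hbot := S.topologicalClosure.inf_orthogonal_eq_bot ▸ mem_inf.2 ⟨sub_mem hx hy, hperp⟩
  exact sub_eq_zero.1 ((mem_bot ℝ).1 hbot)

theorem norm_le_of_mem_topologicalClosure {S : Submodule ℝ E} {x : E} {C : ℝ}
    (hx : x ∈ S.topologicalClosure) (hC : 0 ≤ C) (h : ∀ s ∈ S, ⟪x, s⟫ ≤ C * ‖s‖) :
    ‖x‖ ≤ C := by
  have hxx : ⟪x, x⟫ ≤ C * ‖x‖ :=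
    closure_minimal (t := {y | ⟪x, y⟫ ≤ C * ‖y‖}) h
      (isClosed_le (by fun_prop) (by fun_prop)) hx
  rw [real_inner_self_eq_norm_sq] at hxx
  nlinarith [norm_nonneg x]

end Submodule

theorem LinearMap.exists_ne_zero_apply_mem_orthogonal {E F : Type*} [NormedAddCommGroup E]
    [InnerProductSpace ℝ E] [AddCommGroup F] [Module ℝ F] [FiniteDimensional ℝ F]
    (T : F →ₗ[ℝ] E) (W : Submodule ℝ E) [FiniteDimensional ℝ W]
    (hW : Module.finrank ℝ W < Module.finrank ℝ F) : ∃ x ≠ 0, T x ∈ Wᗮ := by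
  obtain ⟨x, hx, hx0⟩ := (Submodule.ne_bot_iff _).1
    (LinearMap.ker_ne_bot_of_finrank_lt (f := W.orthogonalProjectionOnto.toLinearMap ∘ₗ T) hW)
  exact ⟨x, hx0, Submodule.orthogonalProjectionOnto_eq_zero_iff.1 hx⟩

theorem Real.tsum_mul_le_sqrt_mul_sqrt {κ : Type*} {f g : κ → ℝ}
    (hf : Summable fun k => f k ^ 2) (hg : Summable fun k => g k ^ 2) :
    ∑' k, f k * g k ≤ √(∑' k, f k ^ 2) * √(∑' k, g k ^ 2) := by
  have hfg : Summable fun k => f k * g k :=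
    (hf.add hg).of_norm_bounded fun k => by
      rw [Real.norm_eq_abs, abs_mul]
      nlinarith [sq_abs (f k), sq_abs (g k), sq_nonneg (|f k| - |g k|)]
  refine hfg.tsum_le_of_sum_le fun s => (Real.sum_mul_le_sqrt_mul_sqrt s f g).trans ?_
  gcongr
  · exact hf.sum_le_tsum s fun k _ => sq_nonneg (f k)
  · exact hg.sum_le_tsum s fun k _ => sq_nonneg (g k)

section PotentialFlux

variable {L2 E H : Type*} [NormedAddCommGroup L2] [InnerProductSpace ℝ L2]
  [NormedAddCommGroup E] [InnerProductSpace ℝ E] [AddCommGroup H] [Module ℝ H]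

/-- With `G = ∇ : H¹₀ → (L²)ᵈ` and `ι : H¹₀ → L²`, `t f` is the potential part `(a∇u)_pot` of the
flux of the solution of `-div (a∇u) = f`: it lies in `L²_pot = closure (range ∇)` and has weak
divergence `-f`. -/
structure IsPotentialFlux (G : H →ₗ[ℝ] E) (ι : H →ₗ[ℝ] L2) (t : L2 → E) : Prop where
  mem_closure : ∀ f, t f ∈ (LinearMap.range G).topologicalClosure
  inner_eq : ∀ f φ, ⟪t f, G φ⟫ = ⟪f, ι φ⟫

namespace IsPotentialFlux

variable {G : H →ₗ[ℝ] E} {ι : H →ₗ[ℝ] L2} {t : L2 → E} {T : L2 →ₗ[ℝ] E}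

theorem eq_of_forall_inner_eq (ht : IsPotentialFlux G ι t) {f : L2} {x : E}
    (hx : x ∈ (LinearMap.range G).topologicalClosure) (h : ∀ φ, ⟪x, G φ⟫ = ⟪f, ι φ⟫) :
    t f = x :=
  Submodule.eq_of_mem_topologicalClosure_of_inner_eq (ht.mem_closure f) hx <| by
    rintro _ ⟨φ, rfl⟩
    rw [ht.inner_eq, h]

theorem isLinearMap (ht : IsPotentialFlux G ι t) : IsLinearMap ℝ t where
  map_add f₁ f₂ := ht.eq_of_forall_inner_eq (add_mem (ht.mem_closure f₁) (ht.mem_closure f₂))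
    fun φ => by rw [inner_add_left, ht.inner_eq, ht.inner_eq, inner_add_left]
  map_smul c f := ht.eq_of_forall_inner_eq (Submodule.smul_mem _ c (ht.mem_closure f))
    fun φ => by rw [real_inner_smul_left, ht.inner_eq, real_inner_smul_left]

theorem orthonormal_sqrt_smul (hT : IsPotentialFlux G ι T) {κ : Type*}
    {e : κ → L2} (he : Orthonormal ℝ e) {μ : κ → ℝ} (hμ : ∀ k, 0 < μ k) {w : κ → H}
    (hwe : ∀ k, ι (w k) = e k) (hw : ∀ k φ, ⟪G (w k), G φ⟫ = μ k * ⟪ι (w k), ι φ⟫) :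
    Orthonormal ℝ fun k => √(μ k) • T (e k) := by
  have hTe : ∀ k, T (e k) = (μ k)⁻¹ • G (w k) := fun k =>
    hT.eq_of_forall_inner_eq
      (Submodule.smul_mem _ _ (Submodule.le_topologicalClosure _ (LinearMap.mem_range_self G _)))
      fun φ => by rw [real_inner_smul_left, hw, hwe, inv_mul_cancel_left₀ (hμ k).ne']
  classical
  refine orthonormal_iff_ite.2 fun k l => ?_
  rw [real_inner_smul_left, real_inner_smul_right, hTe l, real_inner_smul_right, hT.inner_eq,
    hwe, orthonormal_iff_ite.1 he]
  split_ifs with hkl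
  · subst hkl
    rw [mul_one, ← mul_assoc, Real.mul_self_sqrt (hμ k).le, mul_inv_cancel₀ (hμ k).ne']
  · simp

theorem norm_le_of_inner_eq_zero (ht : IsPotentialFlux G ι t) (e : HilbertBasis ℕ ℝ L2)
    {μ : ℕ → ℝ} (hμ : ∀ k, 0 < μ k) (hmono : Monotone μ)
    (hg : Orthonormal ℝ fun k => √(μ k) • t (e k)) {M : ℕ} {h : L2}
    (hh : ∀ k < M, ⟪e k, h⟫ = 0) : ‖t h‖ ≤ ‖h‖ / √(μ M) := by
  refine Submodule.norm_le_of_mem_topologicalClosure (ht.mem_closure h) (by positivity) ?_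
  rintro _ ⟨φ, rfl⟩
  set a : ℕ → ℝ := fun k => ⟪h, e k⟫ / √(μ k)
  set b : ℕ → ℝ := fun k => ⟪√(μ k) • t (e k), G φ⟫
  have hab : ∀ k, ⟪h, e k⟫ * ⟪e k, ι φ⟫ = a k * b k := fun k => by
    have := Real.sqrt_pos.2 (hμ k)
    simp only [a, b, real_inner_smul_left, ht.inner_eq]
    field_simp
  have hb : Summable fun k => b k ^ 2 := by
    simpa only [Real.norm_eq_abs, sq_abs] using hg.inner_products_summable (x := G φ)
  have hb_tsum_le : ∑' k, b k ^ 2 ≤ ‖G φ‖ ^ 2 := by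
    simpa only [Real.norm_eq_abs, sq_abs] using hg.tsum_inner_products_le (x := G φ)
  have hparseval : HasSum (fun k => ⟪h, e k⟫ ^ 2) (‖h‖ ^ 2) := by
    simpa only [real_inner_comm h, ← sq, real_inner_self_eq_norm_sq]
      using e.hasSum_inner_mul_inner h h
  have ha_sq_le : ∀ k, a k ^ 2 ≤ ⟪h, e k⟫ ^ 2 / μ M := fun k => by
    rw [div_pow, Real.sq_sqrt (hμ k).le]
    rcases lt_or_ge k M with hk | hk
    · rw [real_inner_comm (e k) h, hh k hk]
      simp
    · exact div_le_div_of_nonneg_left (sq_nonneg _) (hμ M) (hmono hk)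
  have ha : Summable fun k => a k ^ 2 :=
    (hparseval.summable.div_const _).of_nonneg_of_le (fun _ => sq_nonneg _) ha_sq_le
  have ha_tsum_le : ∑' k, a k ^ 2 ≤ ‖h‖ ^ 2 / μ M :=
    (ha.tsum_le_tsum ha_sq_le (hparseval.summable.div_const _)).trans_eq
      (by rw [tsum_div_const, hparseval.tsum_eq])
  calc ⟪t h, G φ⟫ = ∑' k, a k * b k := by
        rw [ht.inner_eq, ← e.tsum_inner_mul_inner]
        exact tsum_congr hab
    _ ≤ √(∑' k, a k ^ 2) * √(∑' k, b k ^ 2) := Real.tsum_mul_le_sqrt_mul_sqrt ha hb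
    _ ≤ √(‖h‖ ^ 2 / μ M) * √(‖G φ‖ ^ 2) := by gcongr
    _ = ‖h‖ / √(μ M) * ‖G φ‖ := by
        rw [Real.sqrt_div' _ (hμ M).le, Real.sqrt_sq (norm_nonneg _), Real.sqrt_sq (norm_nonneg _)]

open Submodule in
theorem exists_mem_span_norm_sub_le (hT : IsPotentialFlux G ι T) (e : HilbertBasis ℕ ℝ L2)
    {μ : ℕ → ℝ} (hμ : ∀ k, 0 < μ k) (hmono : Monotone μ)
    (hg : Orthonormal ℝ fun k => √(μ k) • T (e k)) (S : H →ₗ[ℝ] E) {N : ℕ} (θ : Fin N → H)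
    (hθ : ∀ k, S (θ k) = T (μ k • e k)) (f : L2) :
    ∃ v ∈ span ℝ (Set.range θ), ‖T f - S v‖ ≤ ‖f‖ / √(μ N) := by
  set U := span ℝ (Set.range fun k : Fin N => e k)
  have : FiniteDimensional ℝ U := FiniteDimensional.span_of_finite ℝ (Set.finite_range _)
  set r := Uᗮ.starProjection f
  have hTU : U.map T ≤ (span ℝ (Set.range θ)).map S := by
    rw [map_span, span_le]
    rintro _ ⟨_, ⟨k, rfl⟩, rfl⟩
    refine ⟨(μ k)⁻¹ • θ k, smul_mem _ _ (subset_span ⟨k, rfl⟩), ?_⟩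
    rw [map_smul, hθ, map_smul, smul_smul, inv_mul_cancel₀ (hμ k).ne', one_smul]
  have hfr : f - r ∈ U := by
    simpa only [r, starProjection_orthogonal_val, sub_sub_cancel] using U.starProjection_apply_mem f
  obtain ⟨v, hv, hSv⟩ := hTU (mem_map_of_mem hfr)
  have hr : ∀ k < N, ⟪e k, r⟫ = 0 := fun k hk =>
    (mem_orthogonal U r).1 (Uᗮ.starProjection_apply_mem f) _ (subset_span ⟨⟨k, hk⟩, rfl⟩)
  refine ⟨v, hv, ?_⟩
  calc ‖T f - S v‖ = ‖T r‖ := by rw [hSv, map_sub, sub_sub_cancel]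
    _ ≤ ‖r‖ / √(μ N) := hT.norm_le_of_inner_eq_zero e hμ hmono hg hr
    _ ≤ ‖f‖ / √(μ N) := by gcongr; exact Uᗮ.norm_starProjection_apply_le f

end IsPotentialFlux

variable {T : L2 →ₗ[ℝ] E}

theorem norm_sq_div_le_norm_apply_sum_sq {κ : Type*} [Fintype κ] {e : κ → L2}
    (he : Orthonormal ℝ e) {μ : κ → ℝ} (hμ : ∀ k, 0 < μ k)
    (hg : Orthonormal ℝ fun k => √(μ k) • T (e k)) {m : ℝ} (hm : ∀ k, μ k ≤ m) (c : κ → ℝ) :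
    ‖∑ k, c k • e k‖ ^ 2 / m ≤ ‖T (∑ k, c k • e k)‖ ^ 2 := by
  have hTsum : T (∑ k, c k • e k) = ∑ k, (c k / √(μ k)) • (√(μ k) • T (e k)) := by
    rw [map_sum]
    refine Finset.sum_congr rfl fun k _ => ?_
    rw [map_smul, smul_smul, div_mul_cancel₀ _ (Real.sqrt_pos.2 (hμ k)).ne']
  rw [hTsum, ← real_inner_self_eq_norm_sq, ← real_inner_self_eq_norm_sq, he.inner_sum,
    hg.inner_sum, Finset.sum_div]
  refine Finset.sum_le_sum fun k _ => ?_
  rw [conj_trivial, conj_trivial, ← sq, ← sq, div_pow, Real.sq_sqrt (hμ k).le]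
  exact div_le_div_of_nonneg_left (sq_nonneg _) (hμ k) (hm k)

theorem exists_ne_zero_forall_div_sqrt_le_norm_sub {κ : Type*} [Fintype κ] {e : κ → L2}
    (he : Orthonormal ℝ e) {μ : κ → ℝ} (hμ : ∀ k, 0 < μ k)
    (hg : Orthonormal ℝ fun k => √(μ k) • T (e k)) {m : ℝ} (hm : ∀ k, μ k ≤ m)
    (S : H →ₗ[ℝ] E) (V : Submodule ℝ H) [FiniteDimensional ℝ V]
    (hV : Module.finrank ℝ V < Fintype.card κ) :
    ∃ f ≠ 0, ∀ v ∈ V, ‖f‖ / √m ≤ ‖T f - S v‖ := by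
  obtain ⟨c, hc, hperp⟩ := (T ∘ₗ Fintype.linearCombination ℝ e).exists_ne_zero_apply_mem_orthogonal
    (V.map S) ((Submodule.finrank_map_le S V).trans_lt
      (hV.trans_eq (Module.finrank_fintype_fun_eq_card ℝ).symm))
  rw [LinearMap.comp_apply, Fintype.linearCombination_apply] at hperp
  have hf : ∑ k, c k • e k ≠ 0 := fun h0 =>
    hc (funext (Fintype.linearIndependent_iff.1 he.linearIndependent c h0))
  refine ⟨_, hf, fun v hv => ?_⟩
  have hTf : ‖∑ k, c k • e k‖ / √m ≤ ‖T (∑ k, c k • e k)‖ := by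
    obtain ⟨k, -⟩ := Function.ne_iff.1 hc
    have hm0 : 0 < m := (hμ k).trans_le (hm k)
    rw [← sq_le_sq₀ (by positivity) (norm_nonneg _), div_pow, Real.sq_sqrt hm0.le]
    exact norm_sq_div_le_norm_apply_sum_sq he hμ hg hm c
  have hSv : ⟪T (∑ k, c k • e k), S v⟫ = 0 :=
    (Submodule.mem_orthogonal' _ _).1 hperp _ (Submodule.mem_map_of_mem hv)
  refine hTf.trans ?_
  rw [← sq_le_sq₀ (norm_nonneg _) (norm_nonneg _), norm_sub_sq_real, hSv]
  nlinarith [sq_nonneg ‖S v‖]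

theorem finrank_span_eq_card_of_apply_eq {κ : Type*} [Fintype κ] {e : κ → L2} {μ : κ → ℝ}
    (hμ : ∀ k, 0 < μ k) (hg : Orthonormal ℝ fun k => √(μ k) • T (e k)) (S : H →ₗ[ℝ] E)
    {θ : κ → H} (hθ : ∀ k, S (θ k) = T (μ k • e k)) :
    Module.finrank ℝ (Submodule.span ℝ (Set.range θ)) = Fintype.card κ := by
  refine finrank_span_eq_card (LinearIndependent.of_comp S ?_)
  have hSθ : ⇑S ∘ θ = fun k => (Units.mk0 _ (Real.sqrt_pos.2 (hμ k)).ne') • √(μ k) • T (e k) :=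
    funext fun k => by
      rw [Function.comp_apply, hθ, Units.smul_mk0, smul_smul, Real.mul_self_sqrt (hμ k).le,
        map_smul]
  rw [hSθ]
  exact hg.linearIndependent.units_smul _

end PotentialFlux

section ApproximationRatio

variable {F E H : Type*} [NormedAddCommGroup F] [NormedAddCommGroup E] [Module ℝ E]
  [AddCommGroup H] [Module ℝ H] {T : F → E} {S : H →ₗ[ℝ] E} {V : Submodule ℝ H} {c : ℝ}

theorem iInf_norm_sub_div_le (hc : 0 ≤ c) {f : F} {v : H} (hv : v ∈ V)
    (h : ‖T f - S v‖ ≤ c * ‖f‖) : ⨅ v : V, ‖T f - S v‖ / ‖f‖ ≤ c :=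
  (ciInf_le ⟨0, Set.forall_mem_range.2 fun _ => by positivity⟩ ⟨v, hv⟩).trans
    (div_le_of_le_mul₀ (norm_nonneg _) hc h)

theorem le_iSup_iInf_norm_sub_div {B : ℝ} (hB : 0 ≤ B) (hT : ∀ f, ‖T f‖ ≤ B * ‖f‖) {f : F}
    (hf : f ≠ 0) (h : ∀ v ∈ V, c * ‖f‖ ≤ ‖T f - S v‖) :
    c ≤ ⨆ f, ⨅ v : V, ‖T f - S v‖ / ‖f‖ :=
  le_ciSup_of_le
    ⟨B, Set.forall_mem_range.2 fun f => iInf_norm_sub_div_le hB V.zero_mem (by simpa using hT f)⟩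
    f (le_ciInf fun v => (le_div_iff₀ (norm_pos_iff.2 hf)).2 (h v v.2))

theorem iInf_iSup_iInf_norm_sub_div_eq {P : Submodule ℝ H → Prop} {Θ : Submodule ℝ H}
    (hΘ : P Θ) {B : ℝ} (hB : 0 ≤ B) (hT : ∀ f, ‖T f‖ ≤ B * ‖f‖) (hc : 0 ≤ c)
    (hlow : ∀ V, P V → ∃ f ≠ 0, ∀ v ∈ V, c * ‖f‖ ≤ ‖T f - S v‖)
    (hup : ∀ f, ∃ v ∈ Θ, ‖T f - S v‖ ≤ c * ‖f‖) :
    (⨅ V : {V // P V}, ⨆ f, ⨅ v : (V : Submodule ℝ H), ‖T f - S v‖ / ‖f‖) = c ∧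
      (⨆ f, ⨅ v : Θ, ‖T f - S v‖ / ‖f‖) = c := by
  have hΘle : (⨆ f, ⨅ v : Θ, ‖T f - S v‖ / ‖f‖) ≤ c := ciSup_le fun f =>
    let ⟨_, hv, h⟩ := hup f
    iInf_norm_sub_div_le hc hv h
  have hle : ∀ V, P V → c ≤ ⨆ f, ⨅ v : V, ‖T f - S v‖ / ‖f‖ := fun V hV =>
    let ⟨_, hf, h⟩ := hlow V hV
    le_iSup_iInf_norm_sub_div hB hT hf h
  let Θ' : {V // P V} := ⟨Θ, hΘ⟩
  have : Nonempty {V // P V} := ⟨Θ'⟩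
  have hbdd := Set.forall_mem_range.2 fun V : {V // P V} => hle V.1 V.2
  exact ⟨le_antisymm ((ciInf_le ⟨c, hbdd⟩ Θ').trans hΘle) (le_ciInf fun V => hle V.1 V.2),
    le_antisymm hΘle (hle Θ hΘ)⟩

end ApproximationRatio

theorem optimal_approximation_space_flux_norm_general
    {L2 E H W : Type*}
    [NormedAddCommGroup L2] [InnerProductSpace ℝ L2] [CompleteSpace L2]
    [NormedAddCommGroup E] [InnerProductSpace ℝ E]
    [AddCommGroup H] [Module ℝ H] [AddCommGroup W] [Module ℝ W]
    (G : H →ₗ[ℝ] E) (ι : H →ₗ[ℝ] L2)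
    (Kpot : Submodule ℝ E) [Kpot.HasOrthogonalProjection]
    (hK : Kpot = (LinearMap.range G).topologicalClosure)
    (A : E →ₗ[ℝ] E)
    (sol : L2 → H)
    (hsol : ∀ (f : L2) (φ : H), ⟪A (G (sol f)), G φ⟫ = ⟪f, ι φ⟫)
    (j : W →ₗ[ℝ] H) (lap : W →ₗ[ℝ] L2)
    (hlap : ∀ (w : W) (φ : H), ⟪G (j w), G φ⟫ = -⟪lap w, ι φ⟫)
    (Ψ : ℕ → W) (μ : ℕ → ℝ)
    (hμpos : ∀ k, 0 < μ k) (hμmono : Monotone μ)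
    (heig : ∀ k, lap (Ψ k) = -(μ k) • ι (j (Ψ k)))
    (horth : ∀ k l, ⟪ι (j (Ψ k)), ι (j (Ψ l))⟫ = if k = l then 1 else 0)
    (hcomplete :
      (Submodule.span ℝ (Set.range fun k => ι (j (Ψ k)))).topologicalClosure = ⊤)
    (N : ℕ) (hN : 1 ≤ N) :
    (⨅ V : {V : Submodule ℝ H // Module.finrank ℝ V = N},
        ⨆ f : L2, ⨅ v : (V : Submodule ℝ H),
          ‖(Kpot.orthogonalProjectionOnto (A (G (sol f - (v : H)))) : E)‖ / ‖f‖)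
      = 1 / Real.sqrt (μ N) ∧
    (⨆ f : L2,
        ⨅ v : Submodule.span ℝ (Set.range fun k : Fin N => sol ((μ k) • ι (j (Ψ k)))),
          ‖(Kpot.orthogonalProjectionOnto (A (G (sol f - (v : H)))) : E)‖ / ‖f‖)
      = 1 / Real.sqrt (μ N) := by
  let e : HilbertBasis ℕ ℝ L2 := HilbertBasis.mk (orthonormal_iff_ite.2 horth) hcomplete.ge
  have he : ∀ k, ι (j (Ψ k)) = e k := fun k => by simp [e]
  let S : H →ₗ[ℝ] E := (Kpot.starProjection : E →ₗ[ℝ] E) ∘ₗ A ∘ₗ G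
  have hflux : IsPotentialFlux G ι (S ∘ sol) := by
    refine ⟨fun f => hK ▸ Kpot.starProjection_apply_mem _, fun f φ => ?_⟩
    have hGφ : G φ ∈ Kpot := hK ▸ Submodule.le_topologicalClosure _ (LinearMap.mem_range_self G φ)
    rw [Function.comp_apply, ← hsol]
    exact (Kpot.inner_starProjection_left_eq_right _ _).trans
      (by rw [Kpot.starProjection_eq_self_iff.2 hGφ]; rfl)
  let T : L2 →ₗ[ℝ] E := IsLinearMap.mk' _ hflux.isLinearMap
  have hT : IsPotentialFlux G ι T := hflux
  have hg := hT.orthonormal_sqrt_smul e.orthonormal hμpos he fun k φ => by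
    rw [hlap, heig, real_inner_smul_left, neg_mul, neg_neg]
  have hθ : ∀ k : Fin N, S (sol (μ k • ι (j (Ψ k)))) = T (μ k • e k) := fun k => by rw [he]; rfl
  have hST : ∀ f v, (Kpot.orthogonalProjectionOnto (A (G (sol f - v))) : E) = T f - S v :=
    fun f v => map_sub S (sol f) v
  simp only [hST]
  refine iInf_iSup_iInf_norm_sub_div_eq (P := fun V => Module.finrank ℝ V = N) ?rank
    (B := 1 / √(μ 0)) (by positivity) (fun f => ?bound) (by positivity) (fun V hV => ?lower)
    (fun f => ?upper)
  case rank =>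
    exact (finrank_span_eq_card_of_apply_eq (κ := Fin N) (fun k => hμpos k)
      (hg.comp _ Fin.val_injective) S hθ).trans (Fintype.card_fin N)
  case bound =>
    rw [one_div_mul_eq_div]
    exact hT.norm_le_of_inner_eq_zero e hμpos hμmono hg (M := 0) (by simp)
  case lower =>
    have := Module.finite_of_finrank_pos (hV ▸ hN)
    simpa only [one_div_mul_eq_div] using exists_ne_zero_forall_div_sqrt_le_norm_sub
      (e.orthonormal.comp _ Fin.val_injective) (fun k : Fin (N + 1) => hμpos k)
      (hg.comp _ Fin.val_injective) (fun k => hμmono (Nat.lt_succ_iff.1 k.2)) S V (by simp [hV])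
  case upper =>
    simpa only [one_div_mul_eq_div] using hT.exists_mem_span_norm_sub_le e hμpos hμmono hg S _ hθ f

/-- optimality part of Theorem `Corol1`: with `Ψ_k`, `λ_k` the Dirichlet
eigenfunctions/eigenvalues of `-Δ` on `Ω` (ordered increasingly), for every `N ≥ 1` the
infimum over all `N`-dimensional subspaces `V ⊂ H¹₀(Ω)` of
`sup_{f∈L²} inf_{v∈V} ‖u−v‖_{a-flux}/‖f‖_{L²}` equals `1/√λ_{N+1}`, and it is achieved by
`Θ := span{θ_1,…,θ_N}` where `-div(a∇θ_k) = λ_k Ψ_k` with zero Dirichlet data.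

Abstract encoding: `L2 = L²(Ω)`, `E = (L²(Ω))^d`, `H = H¹₀(Ω)` (gradient `G`,
embedding `ι`), `Kpot = L²_pot(Ω)` the closure of the range of `G`; `A` multiplication by
`a`; `sol` the weak solution operator of `-div(a∇·)`; `W = H²(Ω)∩H¹₀(Ω)` with inclusion
`j` and Laplacian `lap`; `Ψ : ℕ → W` (0-indexed: `Ψ k` is the `(k+1)`-th eigenfunction,
so `λ_{N+1} = μ N`) is an orthonormal complete system of Dirichlet eigenfunctions,
`lap (Ψ k) = -μ k • Ψ k`, and `θ_{k+1} = sol (μ k • Ψ k)`. -/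
theorem optimal_approximation_space_flux_norm
    {L2 E H W : Type*}
    [NormedAddCommGroup L2] [InnerProductSpace ℝ L2] [CompleteSpace L2]
    [NormedAddCommGroup E] [InnerProductSpace ℝ E] [CompleteSpace E]
    [AddCommGroup H] [Module ℝ H] [AddCommGroup W] [Module ℝ W]
    (G : H →ₗ[ℝ] E) (hGinj : Function.Injective G) (ι : H →ₗ[ℝ] L2)
    (Kpot : Submodule ℝ E) [Kpot.HasOrthogonalProjection]
    (hK : Kpot = (LinearMap.range G).topologicalClosure)
    (A : E →ₗ[ℝ] E) (lmin lmax : ℝ) (hlmin : 0 < lmin)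
    (hsym : ∀ ξ η : E, ⟪A ξ, η⟫ = ⟪ξ, A η⟫)
    (hell₁ : ∀ ξ : E, lmin * ‖ξ‖ ^ 2 ≤ ⟪ξ, A ξ⟫)
    (hell₂ : ∀ ξ : E, ⟪ξ, A ξ⟫ ≤ lmax * ‖ξ‖ ^ 2)
    (sol : L2 → H)
    (hsol : ∀ (f : L2) (φ : H), ⟪A (G (sol f)), G φ⟫ = ⟪f, ι φ⟫)
    (j : W →ₗ[ℝ] H) (lap : W →ₗ[ℝ] L2)
    (hlap : ∀ (w : W) (φ : H), ⟪G (j w), G φ⟫ = -⟪lap w, ι φ⟫)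
    (hreg : ∀ f : L2, ∃ w : W, lap w = -f)
    (Ψ : ℕ → W) (μ : ℕ → ℝ)
    (hμpos : ∀ k, 0 < μ k) (hμmono : Monotone μ)
    (heig : ∀ k, lap (Ψ k) = -(μ k) • ι (j (Ψ k)))
    (horth : ∀ k l, ⟪ι (j (Ψ k)), ι (j (Ψ l))⟫ = if k = l then 1 else 0)
    (hcomplete :
      (Submodule.span ℝ (Set.range fun k => ι (j (Ψ k)))).topologicalClosure = ⊤)
    (N : ℕ) (hN : 1 ≤ N) :
    (⨅ V : {V : Submodule ℝ H // Module.finrank ℝ V = N},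
        ⨆ f : L2, ⨅ v : (V : Submodule ℝ H),
          ‖(Kpot.orthogonalProjectionOnto (A (G (sol f - (v : H)))) : E)‖ / ‖f‖)
      = 1 / Real.sqrt (μ N) ∧
    (⨆ f : L2,
        ⨅ v : Submodule.span ℝ (Set.range fun k : Fin N => sol ((μ k) • ι (j (Ψ k)))),
          ‖(Kpot.orthogonalProjectionOnto (A (G (sol f - (v : H)))) : E)‖ / ‖f‖)
      = 1 / Real.sqrt (μ N) :=
  optimal_approximation_space_flux_norm_general G ι Kpot hK A sol hsol j lap hlap Ψ μ hμpos hμmono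
    heig horth hcomplete N hN
end

section
/- (Equivalence of flux-error plus non-conforming error with full gradient error) There exists C depending only on λ_min(a), λ_max(a) such that for all u ∈ H¹₀(Ω) and ζ ∈ (L²(Ω))^d: (1/C)(‖(a(∇u−ζ))_pot‖_{L²} + ‖ζ_curl‖_{L²}) ≤ ‖∇u − ζ‖_{L²} ≤ C(‖(a(∇u−ζ))_pot‖_{L²} + ‖ζ_curl‖_{L²}), where ζ = ζ_pot + ζ_curl is the Weyl–Helmholtz decomposition. -/
/-!
Write `e = ∇u − ζ` and `P` for the projection onto potential fields. Since `∇u` is potential,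
`ζ_curl = −(e − P e)`, so both sides only involve `e`. Cauchy–Schwarz for the form `⟪·, a ·⟫`
gives `‖a e‖ ≤ λ_max ‖e‖`, which bounds the flux and curl errors by `(1 + λ_max) ‖e‖`.
Conversely, as `P` is self-adjoint, `⟪e, a e⟫ = ⟪e, P (a e)⟫ + ⟪e − P e, a e⟫`, and coercivity
turns this into `λ_min ‖e‖ ≤ ‖P (a e)‖ + λ_max ‖e − P e‖`.
-/

open RealInnerProductSpace

variable {E : Type*} [NormedAddCommGroup E] [InnerProductSpace ℝ E]

namespace LinearMap.IsPositive

variable {A : E →ₗ[ℝ] E}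

theorem inner_map_sq_le (hA : A.IsPositive) (x y : E) :
    ⟪x, A y⟫ ^ 2 ≤ ⟪x, A x⟫ * ⟪y, A y⟫ := by
  have hyx : ⟪y, A x⟫ = ⟪x, A y⟫ := by rw [← hA.isSymmetric y x, real_inner_comm]
  have hquad : ∀ t : ℝ, 0 ≤ ⟪y, A y⟫ * (t * t) + 2 * ⟪x, A y⟫ * t + ⟪x, A x⟫ := fun t => by
    have h := hA.inner_nonneg_right (x + t • y)
    simp only [map_add, map_smul, inner_add_left, inner_add_right, real_inner_smul_left,
      real_inner_smul_right, hyx] at h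
    linarith
  have := discrim_le_zero hquad
  rw [discrim] at this
  linarith

theorem norm_map_le (hA : A.IsPositive) {M : ℝ} (hM : ∀ x, ⟪x, A x⟫ ≤ M * ‖x‖ ^ 2) (x : E) :
    ‖A x‖ ≤ M * ‖x‖ := by
  have hcs : (‖A x‖ ^ 2) ^ 2 ≤ (M * ‖A x‖ ^ 2) * (M * ‖x‖ ^ 2) :=
    calc (‖A x‖ ^ 2) ^ 2 = ⟪A x, A x⟫ ^ 2 := by rw [real_inner_self_eq_norm_sq]
      _ ≤ ⟪A x, A (A x)⟫ * ⟪x, A x⟫ := hA.inner_map_sq_le (A x) x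
      _ ≤ (M * ‖A x‖ ^ 2) * (M * ‖x‖ ^ 2) :=
        mul_le_mul (hM _) (hM x) (hA.inner_nonneg_right x) ((hA.inner_nonneg_right _).trans (hM _))
  have hMx : 0 ≤ M * ‖x‖ := by
    rcases (norm_nonneg x).eq_or_lt with hx | hx
    · rw [← hx, mul_zero]
    · have := (hA.inner_nonneg_right x).trans (hM x)
      nlinarith
  rcases (norm_nonneg (A x)).eq_or_lt with hAx | hAx
  · rw [← hAx]
    exact hMx
  have hsq : ‖A x‖ ^ 2 ≤ (M * ‖x‖) ^ 2 :=
    le_of_mul_le_mul_left (by linarith) (by positivity : 0 < ‖A x‖ ^ 2)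
  exact (pow_le_pow_iff_left₀ (norm_nonneg _) hMx two_ne_zero).mp hsq

end LinearMap.IsPositive

namespace Submodule

variable {K : Submodule ℝ E} [K.HasOrthogonalProjection]

theorem norm_sub_starProjection_sub_of_mem {g : E} (hg : g ∈ K) (ζ : E) :
    ‖(g - ζ) - K.starProjection (g - ζ)‖ = ‖ζ - K.starProjection ζ‖ := by
  rw [map_sub, starProjection_eq_self_iff.mpr hg, ← norm_neg]
  congr 1
  abel

variable (K) {A : E →ₗ[ℝ] E} {M : ℝ} {e : E}

theorem norm_starProjection_map_add_norm_sub_starProjection_le (hAe : ‖A e‖ ≤ M * ‖e‖) :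
    ‖K.starProjection (A e)‖ + ‖e - K.starProjection e‖ ≤ (M + 1) * ‖e‖ := by
  have hflux := (K.norm_starProjection_apply_le (A e)).trans hAe
  have hcurl : ‖e - K.starProjection e‖ ≤ ‖e‖ :=
    K.starProjection_orthogonal_val e ▸ Kᗮ.norm_starProjection_apply_le e
  linarith

theorem mul_norm_le_norm_starProjection_map_add (hAe : ‖A e‖ ≤ M * ‖e‖) {m : ℝ}
    (hm : m * ‖e‖ ^ 2 ≤ ⟪e, A e⟫) :
    m * ‖e‖ ≤ ‖K.starProjection (A e)‖ + M * ‖e - K.starProjection e‖ := by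
  rcases eq_or_ne e 0 with rfl | he
  · simp
  have hsplit : ⟪e, A e⟫ = ⟪e, K.starProjection (A e)⟫ + ⟪e - K.starProjection e, A e⟫ := by
    rw [← K.inner_starProjection_left_eq_right, ← inner_add_left, add_sub_cancel]
  have hflux := real_inner_le_norm e (K.starProjection (A e))
  have hcurl : ⟪e - K.starProjection e, A e⟫ ≤ ‖e - K.starProjection e‖ * (M * ‖e‖) :=
    (real_inner_le_norm _ _).trans (mul_le_mul_of_nonneg_left hAe (norm_nonneg _))
  have hpos : 0 < ‖e‖ := norm_pos_iff.mpr he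
  refine le_of_mul_le_mul_right ?_ hpos
  nlinarith

end Submodule

/-- Lemma `kkhkjhkjhu`: there is a constant `C` depending only on
`λ_min(a)` and `λ_max(a)` such that for all `u ∈ H¹₀(Ω)` and `ζ ∈ (L²(Ω))^d`,
`(1/C)(‖(a(∇u−ζ))_pot‖ + ‖ζ_curl‖) ≤ ‖∇u − ζ‖ ≤ C(‖(a(∇u−ζ))_pot‖ + ‖ζ_curl‖)`,
where `ζ = ζ_pot + ζ_curl` is the Weyl–Helmholtz decomposition.

Abstract encoding: `E = (L²(Ω))^d` a Hilbert space, `Kpot = L²_pot(Ω)` a subspace with an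
orthogonal projection `P` (so `ζ_pot = P ζ` and `ζ_curl = ζ − P ζ`), `H = H¹₀(Ω)` with
gradient `G` taking values in `Kpot`, and `A` multiplication by the symmetric matrix
`a(x)` with ellipticity bounds `lmin`, `lmax`. The constant `C` is quantified before the
spaces and data, so it depends only on `lmin` and `lmax`. -/
theorem gradient_error_equivalent_flux_plus_curl :
    ∀ lmin lmax : ℝ, 0 < lmin → lmin ≤ lmax →
    ∃ C : ℝ, 0 < C ∧
      ∀ (E H : Type) [NormedAddCommGroup E] [InnerProductSpace ℝ E] [CompleteSpace E]
        [AddCommGroup H] [Module ℝ H],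
      ∀ (G : H →ₗ[ℝ] E) (Kpot : Submodule ℝ E) [Kpot.HasOrthogonalProjection],
        (∀ ψ : H, G ψ ∈ Kpot) →
      ∀ A : E →ₗ[ℝ] E,
        (∀ ξ η : E, ⟪A ξ, η⟫ = ⟪ξ, A η⟫) →
        (∀ ξ : E, lmin * ‖ξ‖ ^ 2 ≤ ⟪ξ, A ξ⟫) →
        (∀ ξ : E, ⟪ξ, A ξ⟫ ≤ lmax * ‖ξ‖ ^ 2) →
      ∀ (u : H) (ζ : E),
        (1 / C) * (‖(Kpot.orthogonalProjectionOnto (A (G u - ζ)) : E)‖ +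
            ‖ζ - (Kpot.orthogonalProjectionOnto ζ : E)‖) ≤ ‖G u - ζ‖ ∧
        ‖G u - ζ‖ ≤ C * (‖(Kpot.orthogonalProjectionOnto (A (G u - ζ)) : E)‖ +
            ‖ζ - (Kpot.orthogonalProjectionOnto ζ : E)‖) := by
  intro lmin lmax hlmin hle
  have hlmax : 0 < lmax := hlmin.trans_le hle
  refine ⟨(1 + lmax) * (1 + 1 / lmin), by positivity, ?_⟩
  intro E H _ _ _ _ _ G Kpot _ hG A hsymm hlow hupp u ζ
  have hA : A.IsPositive := A.isPositive_iff.mpr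
    ⟨hsymm, fun ξ => real_inner_comm ξ (A ξ) ▸ (by positivity : 0 ≤ lmin * ‖ξ‖ ^ 2).trans (hlow ξ)⟩
  have hAe := hA.norm_map_le hupp (G u - ζ)
  have hupper := Kpot.norm_starProjection_map_add_norm_sub_starProjection_le hAe
  have hlower := Kpot.mul_norm_le_norm_starProjection_map_add hAe (hlow _)
  rw [← Submodule.starProjection_apply, ← Submodule.starProjection_apply,
    ← Submodule.norm_sub_starProjection_sub_of_mem (hG u)]
  set e := G u - ζ
  set p := ‖Kpot.starProjection (A e)‖
  set q := ‖e - Kpot.starProjection e‖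
  have hp : 0 ≤ p := norm_nonneg _
  have hq : 0 ≤ q := norm_nonneg _
  have hinv : 0 < 1 / lmin := by positivity
  constructor
  · rw [one_div, inv_mul_le_iff₀ (by positivity)]
    nlinarith [norm_nonneg e]
  · calc ‖e‖ = 1 / lmin * (lmin * ‖e‖) := by field_simp
      _ ≤ 1 / lmin * ((1 + lmax) * (p + q)) := mul_le_mul_of_nonneg_left (by nlinarith) hinv.le
      _ ≤ (1 + lmax) * (1 + 1 / lmin) * (p + q) := by nlinarith [mul_nonneg hlmax.le hp]
end

section
/- (Nonzero Neumann flux-norm representation) For h ∈ L²(∂Ω) let w^h ∈ H¹(Ω) solve Δw^h = 0 in Ω with n·∇w^h = h on ∂Ω (with mean-zero compatibility), and for v ∈ H¹(Ω) set h_v := n·a∇v on ∂Ω. Then ‖(∇w^h − a∇v)_potn‖²_{L²(Ω)} = ∫_{∂Ω}(h − h_v)Λ^{−1}(h − h_v), where Λ is the Dirichlet-to-Neumann map of the Laplacian on Ω and (·)_potn is the projection onto the closure of {∇v : v ∈ H¹(Ω)} in (L²(Ω))^d. -/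
open RealInnerProductSpace

/-!
Testing the weak Neumann problems for `w`, `v` and `wd` against `∇φ` shows that
`∇w − a∇v` and `∇wd` have the same inner product with every gradient. Hence
`∇w − a∇v − ∇wd` is orthogonal to the closure of the gradients, so the projection of
`∇w − a∇v` is `∇wd`, and its squared norm `⟪∇wd, ∇wd⟫` is `⟪h − h_v, tr wd⟫` by the
Neumann problem for `wd` tested against `wd` itself.
-/

namespace LinearMap

open Submodule

variable {𝕜 E H : Type*} [RCLike 𝕜] [NormedAddCommGroup E] [InnerProductSpace 𝕜 E]
  [AddCommGroup H] [Module 𝕜 H]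

theorem sub_mem_orthogonal_range_of_inner_eq (G : H →ₗ[𝕜] E) {ξ : E} {u : H}
    (hu : ∀ φ, inner 𝕜 ξ (G φ) = inner 𝕜 (G u) (G φ)) : ξ - G u ∈ (range G)ᗮ := by
  rw [mem_orthogonal']
  rintro _ ⟨φ, rfl⟩
  rw [inner_sub_left, hu, sub_self]

theorem starProjection_closure_range_eq_of_inner_eq (G : H →ₗ[𝕜] E)
    [(range G).topologicalClosure.HasOrthogonalProjection] {ξ : E} {u : H}
    (hu : ∀ φ, inner 𝕜 ξ (G φ) = inner 𝕜 (G u) (G φ)) :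
    (range G).topologicalClosure.starProjection ξ = G u :=
  eq_starProjection_of_mem_orthogonal (le_topologicalClosure _ (mem_range_self G u))
    (by simpa only [orthogonal_closure] using sub_mem_orthogonal_range_of_inner_eq G hu)

end LinearMap

theorem neumann_flux_norm_representation_general
    {E H1 B : Type*}
    [NormedAddCommGroup E] [InnerProductSpace ℝ E]
    [NormedAddCommGroup B] [InnerProductSpace ℝ B]
    [AddCommGroup H1] [Module ℝ H1]
    (G : H1 →ₗ[ℝ] E) (tr : H1 →ₗ[ℝ] B)
    (Kpotn : Submodule ℝ E) [Kpotn.HasOrthogonalProjection]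
    (hK : Kpotn = (LinearMap.range G).topologicalClosure)
    (A : E →ₗ[ℝ] E)
    (h : B) (w : H1)
    (hw : ∀ φ : H1, ⟪G w, G φ⟫ = ⟪h, tr φ⟫)
    (v : H1) (hv : B)
    (hhv : ∀ φ : H1, ⟪A (G v), G φ⟫ = ⟪hv, tr φ⟫)
    (wd : H1)
    (hwd : ∀ φ : H1, ⟪G wd, G φ⟫ = ⟪h - hv, tr φ⟫) :
    ‖(Kpotn.orthogonalProjectionOnto (G w - A (G v)) : E)‖ ^ 2 = ⟪h - hv, tr wd⟫ := by
  subst hK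
  have hflux : ∀ φ, ⟪G w - A (G v), G φ⟫ = ⟪G wd, G φ⟫ := fun φ => by
    rw [inner_sub_left, hw, hhv, hwd, inner_sub_left]
  rw [← Submodule.starProjection_apply, G.starProjection_closure_range_eq_of_inner_eq hflux,
    ← real_inner_self_eq_norm_sq, hwd]

/-- Lemma `h2`, nonzero Neumann flux-norm representation: for
`h ∈ L²(∂Ω)` let `w^h ∈ H¹(Ω)` be harmonic with Neumann data `n·∇w^h = h`
(weakly: `⟪∇w^h, ∇φ⟫ = ⟪h, φ|_{∂Ω}⟫` for all `φ ∈ H¹(Ω)`, which encodes both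
`Δw^h = 0` and the boundary condition, and forces the mean-zero compatibility of `h`);
for `v ∈ H¹(Ω)` let `h_v = n·a∇v` (weakly: `⟪a∇v, ∇φ⟫ = ⟪h_v, φ|_{∂Ω}⟫ ∀φ`).
Then `‖(∇w^h − a∇v)_potn‖²_{L²(Ω)} = ∫_{∂Ω}(h − h_v)Λ⁻¹(h − h_v)`, where `Λ` is the
Dirichlet-to-Neumann map, so that `Λ⁻¹(h−h_v)` is the boundary trace of the harmonic
function `wd` with Neumann data `h − h_v`.

Abstract encoding: `E = (L²(Ω))^d`, `H1 = H¹(Ω)` with gradient `G`, `B = L²(∂Ω)` with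
trace map `tr : H¹(Ω) → L²(∂Ω)`; `Kpotn = L²_potn(Ω)` is the closure of the range of `G`
(gradients of `H¹(Ω)` functions) and `(·)_potn` the orthogonal projection onto it;
`A` is multiplication by the symmetric uniformly elliptic matrix `a`. -/
theorem neumann_flux_norm_representation
    {E H1 B : Type*}
    [NormedAddCommGroup E] [InnerProductSpace ℝ E] [CompleteSpace E]
    [NormedAddCommGroup B] [InnerProductSpace ℝ B] [CompleteSpace B]
    [AddCommGroup H1] [Module ℝ H1]
    (G : H1 →ₗ[ℝ] E) (tr : H1 →ₗ[ℝ] B)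
    (Kpotn : Submodule ℝ E) [Kpotn.HasOrthogonalProjection]
    (hK : Kpotn = (LinearMap.range G).topologicalClosure)
    (A : E →ₗ[ℝ] E) (lmin lmax : ℝ) (hlmin : 0 < lmin)
    (hsym : ∀ ξ η : E, ⟪A ξ, η⟫ = ⟪ξ, A η⟫)
    (hell₁ : ∀ ξ : E, lmin * ‖ξ‖ ^ 2 ≤ ⟪ξ, A ξ⟫)
    (hell₂ : ∀ ξ : E, ⟪ξ, A ξ⟫ ≤ lmax * ‖ξ‖ ^ 2)
    (h : B) (w : H1)
    (hw : ∀ φ : H1, ⟪G w, G φ⟫ = ⟪h, tr φ⟫)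
    (v : H1) (hv : B)
    (hhv : ∀ φ : H1, ⟪A (G v), G φ⟫ = ⟪hv, tr φ⟫)
    (wd : H1)
    (hwd : ∀ φ : H1, ⟪G wd, G φ⟫ = ⟪h - hv, tr φ⟫) :
    ‖(Kpotn.orthogonalProjectionOnto (G w - A (G v)) : E)‖ ^ 2 = ⟪h - hv, tr wd⟫ :=
  neumann_flux_norm_representation_general G tr Kpotn hK A h w hw v hv hhv wd hwd
end
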